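/- arXiv:2306.12918 — 8 statements merged into one kernel-verified Lean document; each statement's English description precedes it below -/
import Mathlib

section
/- The number of labelled trees on the vertex set {1,...,n} is n^(n-2), for n ≥ 1. -/
open SimpleGraph Finset Function

namespace Cayley

variable {n : ℕ} [NeZero n]
set_option linter.unusedSectionVars false

/-- Parent functions rooted at 0. -/
def Good (f : Fin n → Fin n) : Prop :=
  f 0 = 0 ∧ ∀ v, ∃ k, f^[k] v = 0

lemma Good.no_periodic {f : Fin n → Fin n} (hf : Good f) {v : Fin n} {j : ℕ}
    (hj : f^[j] v = v) (hv : v ≠ 0) : j = 0 := by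
  by_contra hj0
  obtain ⟨k, hk⟩ := hf.2 v
  have hper : f^[k * j] v = v := by
    rw [mul_comm, Function.iterate_mul]
    exact Function.iterate_fixed hj k
  have hkj : k ≤ k * j := Nat.le_mul_of_pos_right k (Nat.pos_of_ne_zero hj0)
  have : f^[k * j] v = 0 := by
    obtain ⟨d, hd⟩ := Nat.exists_eq_add_of_le hkj
    rw [hd, add_comm, Function.iterate_add_apply, hk, Function.iterate_fixed hf.1]
  exact hv (hper ▸ this)

lemma Good.fv_ne {f : Fin n → Fin n} (hf : Good f) {v : Fin n} (hv : v ≠ 0) : f v ≠ v :=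
  fun h => one_ne_zero (hf.no_periodic (j := 1) (by simpa using h) hv)

noncomputable def kf {f : Fin n → Fin n} (hf : Good f) (v : Fin n) : ℕ :=
  Nat.find (hf.2 v)

lemma kf_spec {f : Fin n → Fin n} (hf : Good f) (v : Fin n) : f^[kf hf v] v = 0 :=
  Nat.find_spec (hf.2 v)

lemma kf_eq_zero_iff {f : Fin n → Fin n} (hf : Good f) {v : Fin n} :
    kf hf v = 0 ↔ v = 0 := by
  constructor
  · intro h
    have := kf_spec hf v
    rwa [h] at this
  · intro h
    subst h
    exact Nat.find_eq_zero (hf.2 0) |>.2 rfl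

lemma kf_succ {f : Fin n → Fin n} (hf : Good f) {v : Fin n} (hv : v ≠ 0) :
    kf hf v = kf hf (f v) + 1 := by
  have h1 : kf hf v ≠ 0 := fun h => hv ((kf_eq_zero_iff hf).1 h)
  have hle : kf hf (f v) ≤ kf hf v - 1 := by
    apply Nat.find_le
    have := kf_spec hf v
    rwa [show kf hf v = (kf hf v - 1) + 1 by omega, Function.iterate_succ_apply] at this
  have hge : kf hf v ≤ kf hf (f v) + 1 := by
    apply Nat.find_le
    rw [Function.iterate_succ_apply]
    exact kf_spec hf (f v)
  omega

/-- The graph of a parent function. -/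
def toGraph (f : Fin n → Fin n) : SimpleGraph (Fin n) := SimpleGraph.fromRel (fun v w => f v = w)

lemma toGraph_adj {f : Fin n → Fin n} {v w : Fin n} :
    (toGraph f).Adj v w ↔ v ≠ w ∧ (f v = w ∨ f w = v) := SimpleGraph.fromRel_adj _ _ _

lemma Good.adj_parent {f : Fin n → Fin n} (hf : Good f) {v : Fin n} (hv : v ≠ 0) :
    (toGraph f).Adj v (f v) :=
  toGraph_adj.2 ⟨fun h => hf.fv_ne hv h.symm, Or.inl rfl⟩

lemma Good.reachable_zero {f : Fin n → Fin n} (hf : Good f) (v : Fin n) :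
    (toGraph f).Reachable v 0 := by
  obtain ⟨k, hk⟩ := hf.2 v
  induction k generalizing v with
  | zero => exact hk ▸ Reachable.refl v
  | succ k ih =>
    by_cases hv : v = 0
    · subst hv; exact Reachable.refl 0
    · exact (hf.adj_parent hv).reachable.trans (ih (f v) (by rwa [Function.iterate_succ_apply] at hk))

lemma Good.connected {f : Fin n → Fin n} (hf : Good f) : (toGraph f).Connected := by
  rw [connected_iff]
  exact ⟨fun v w => (hf.reachable_zero v).trans (hf.reachable_zero w).symm, ⟨0⟩⟩

lemma Good.edgeFinset_eq {f : Fin n → Fin n} (hf : Good f) [Fintype (toGraph f).edgeSet] :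
    (toGraph f).edgeFinset = (Finset.univ.erase 0).image (fun v => s(v, f v)) := by
  ext e
  induction e with
  | _ a b =>
    simp only [mem_edgeFinset, mem_edgeSet, toGraph_adj, Finset.mem_image, Finset.mem_erase,
      Finset.mem_univ, and_true]
    constructor
    · rintro ⟨hne, h | h⟩
      · refine ⟨a, ?_, by rw [h]⟩
        rintro rfl
        exact hne (h ▸ hf.1).symm
      · refine ⟨b, ?_, by rw [h, Sym2.eq_swap]⟩
        rintro rfl
        exact hne (h ▸ hf.1)
    · rintro ⟨v, hv0, hv⟩
      rw [Sym2.eq_iff] at hv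
      rcases hv with ⟨rfl, rfl⟩ | ⟨rfl, rfl⟩
      · exact ⟨fun h => hf.fv_ne hv0 h.symm, Or.inl rfl⟩
      · exact ⟨fun h => hf.fv_ne hv0 h, Or.inr rfl⟩

lemma Good.card_edgeFinset {f : Fin n → Fin n} (hf : Good f) [Fintype (toGraph f).edgeSet] :
    (toGraph f).edgeFinset.card = n - 1 := by
  rw [hf.edgeFinset_eq, Finset.card_image_of_injOn, Finset.card_erase_of_mem (Finset.mem_univ _),
    Finset.card_univ, Fintype.card_fin]
  intro a ha b hb hab
  simp only [Finset.coe_erase, Set.mem_diff, Finset.coe_univ, Set.mem_univ, true_and,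
    Finset.coe_singleton, Set.mem_singleton_iff] at ha hb
  rw [Sym2.eq_iff] at hab
  rcases hab with ⟨rfl, _⟩ | ⟨h1, h2⟩
  · rfl
  · subst h1
    have : f^[2] (f b) = f b := by simp [h2]
    have h0 := hf.no_periodic this ha
    omega


lemma Good.crossing_walk {f : Fin n → Fin n} (hf : Good f) {v : Fin n} (hv : v ≠ 0)
    {x y : Fin n} (p : (toGraph f).Walk x y)
    (hx : ∃ j, f^[j] x = v) (hy : ¬ ∃ j, f^[j] y = v) : s(v, f v) ∈ p.edges := by
  induction p with
  | nil => exact absurd hx hy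
  | @cons a b c h q ih =>
    by_cases hb : ∃ j, f^[j] b = v
    · simp [ih hb hy]
    · -- the edge a-b crosses, so it must be s(v, f v)
      rw [toGraph_adj] at h
      have he : s(a, b) = s(v, f v) := by
        rcases h.2 with hab | hab
        · obtain ⟨j, hj⟩ := hx
          cases j with
          | zero =>
            simp only [Function.iterate_zero, id] at hj
            subst hj
            rw [hab]
          | succ j =>
            exfalso
            exact hb ⟨j, by rwa [Function.iterate_succ_apply, hab] at hj⟩
        · exfalso
          obtain ⟨j, hj⟩ := hx
          exact hb ⟨j + 1, by rwa [Function.iterate_succ_apply, hab]⟩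
      simp [he]

lemma Good.isBridge {f : Fin n → Fin n} (hf : Good f) {v : Fin n} (hv : v ≠ 0) :
    (toGraph f).IsBridge s(v, f v) := by
  rw [isBridge_iff_adj_and_forall_walk_mem_edges]
  refine fun p => ?_
  refine hf.crossing_walk hv p ⟨0, rfl⟩ ?_
  rintro ⟨j, hj⟩
  have : f^[j + 1] v = v := by rwa [Function.iterate_succ_apply]
  exact Nat.succ_ne_zero j (hf.no_periodic this hv)

lemma Good.isAcyclic {f : Fin n → Fin n} (hf : Good f) : (toGraph f).IsAcyclic := by
  rw [isAcyclic_iff_forall_adj_isBridge]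
  intro u w h
  have h' := h
  rw [toGraph_adj] at h'
  rcases h'.2 with hw | hw
  · have hu : u ≠ 0 := by
      rintro rfl
      rw [hf.1] at hw
      exact h'.1 hw
    subst hw
    exact hf.isBridge hu
  · have hw0 : w ≠ 0 := by
      rintro rfl
      rw [hf.1] at hw
      exact h'.1 hw.symm
    subst hw
    rw [Sym2.eq_swap]
    exact hf.isBridge hw0

lemma Good.isTree {f : Fin n → Fin n} (hf : Good f) : (toGraph f).IsTree :=
  ⟨hf.connected, hf.isAcyclic⟩


lemma Good.kf_le_walk_length' {f : Fin n → Fin n} (hf : Good f) {v w : Fin n}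
    (p : (toGraph f).Walk v w) : kf hf v ≤ kf hf w + p.length := by
  induction p with
  | nil => simp
  | @cons a b c h q ih =>
    rw [toGraph_adj] at h
    rcases h.2 with hab | hab
    · have ha : a ≠ 0 := by
        rintro rfl
        rw [hf.1] at hab
        exact h.1 hab
      rw [Walk.length_cons, kf_succ hf ha, hab]
      omega
    · have hb : b ≠ 0 := by
        rintro rfl
        rw [hf.1] at hab
        exact h.1 hab.symm
      have := kf_succ hf hb
      rw [hab] at this
      rw [Walk.length_cons]
      omega

lemma Good.kf_le_walk_length {f : Fin n → Fin n} (hf : Good f) {v : Fin n}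
    (p : (toGraph f).Walk v 0) : kf hf v ≤ p.length := by
  have := hf.kf_le_walk_length' p
  rwa [(kf_eq_zero_iff hf).2 rfl, zero_add] at this

lemma Good.exists_walk {f : Fin n → Fin n} (hf : Good f) (v : Fin n) :
    ∃ p : (toGraph f).Walk v 0, p.length = kf hf v := by
  obtain ⟨k, hk⟩ : ∃ k, kf hf v = k := ⟨_, rfl⟩
  induction k generalizing v with
  | zero =>
    have : v = 0 := (kf_eq_zero_iff hf).1 hk
    subst this
    exact ⟨Walk.nil, by simpa using hk.symm⟩
  | succ k ih =>
    have hv : v ≠ 0 := by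
      rintro rfl
      rw [(kf_eq_zero_iff hf).2 rfl] at hk
      exact Nat.succ_ne_zero k hk.symm
    have hfv : kf hf (f v) = k := by
      have := kf_succ hf hv
      omega
    obtain ⟨q, hq⟩ := ih (f v) hfv
    exact ⟨Walk.cons (hf.adj_parent hv) q, by rw [Walk.length_cons, hq, hfv, hk]⟩

lemma toGraph_injOn {f g : Fin n → Fin n} (hf : Good f) (hg : Good g)
    (h : toGraph f = toGraph g) : f = g := by
  have hk : ∀ v, kf hf v = kf hg v := by
    intro v
    apply le_antisymm
    · obtain ⟨p, hp⟩ := hg.exists_walk v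
      have := hf.kf_le_walk_length (p.mapLe (le_of_eq h.symm))
      rwa [Walk.length_map, hp] at this
    · obtain ⟨p, hp⟩ := hf.exists_walk v
      have := hg.kf_le_walk_length (p.mapLe (le_of_eq h))
      rwa [Walk.length_map, hp] at this
  funext v
  by_cases hv : v = 0
  · rw [hv, hf.1, hg.1]
  · have hadj : (toGraph g).Adj v (f v) := h ▸ hf.adj_parent hv
    rw [toGraph_adj] at hadj
    rcases hadj.2 with he | he
    · exact he.symm
    · exfalso
      have hfv0 : f v ≠ 0 := by
        rintro h0
        rw [h0] at he
        rw [hg.1] at he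
        exact hv he.symm
      have h1 : kf hg (f v) = kf hg v + 1 := by rw [kf_succ hg hfv0, he]
      have h2 : kf hf v = kf hf (f v) + 1 := kf_succ hf hv
      rw [hk v, hk (f v)] at h2
      omega

section FromTree

variable {T : SimpleGraph (Fin n)} (hT : T.IsTree)

/-- The canonical path from `v` to `0` in a tree. -/
noncomputable def pathTo (hT : T.IsTree) (v : Fin n) : T.Walk v 0 :=
  (hT.existsUnique_path v 0).exists.choose

lemma pathTo_isPath (v : Fin n) : (pathTo hT v).IsPath :=
  (hT.existsUnique_path v 0).exists.choose_spec

lemma pathTo_unique {v : Fin n} (p : T.Walk v 0) (hp : p.IsPath) : p = pathTo hT v :=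
  (hT.existsUnique_path v 0).unique hp (pathTo_isPath hT v)

/-- The parent function of a tree, rooted at 0. -/
noncomputable def parent (hT : T.IsTree) (v : Fin n) : Fin n :=
  if v = 0 then 0 else (pathTo hT v).getVert 1

lemma parent_zero : parent hT 0 = 0 := if_pos rfl

lemma pathTo_not_nil {v : Fin n} (hv : v ≠ 0) : ¬ (pathTo hT v).Nil :=
  Walk.not_nil_of_ne hv

lemma parent_adj {v : Fin n} (hv : v ≠ 0) : T.Adj v (parent hT v) := by
  rw [parent, if_neg hv]
  have hlen : (pathTo hT v).length ≠ 0 :=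
    fun h0 => pathTo_not_nil hT hv (Walk.nil_iff_length_eq.2 h0)
  have h := Walk.adj_getVert_succ (pathTo hT v) (i := 0) (Nat.pos_of_ne_zero hlen)
  simpa using h

lemma pathTo_parent {v : Fin n} (hv : v ≠ 0) :
    (pathTo hT v).tail = (pathTo hT (parent hT v)).copy (by rw [parent, if_neg hv]) rfl := by
  have : ((pathTo hT v).tail.copy (by rw [parent, if_neg hv]) rfl : T.Walk (parent hT v) 0)
      = pathTo hT (parent hT v) := by
    apply pathTo_unique
    rw [Walk.isPath_copy]
    exact (pathTo_isPath hT v).tail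
  rw [← this]
  simp

lemma length_pathTo_parent {v : Fin n} (hv : v ≠ 0) :
    (pathTo hT (parent hT v)).length + 1 = (pathTo hT v).length := by
  have h := Walk.length_tail_add_one (pathTo_not_nil hT hv)
  rw [pathTo_parent hT hv] at h
  simpa using h

lemma good_parent : Good (parent hT) := by
  refine ⟨parent_zero hT, fun v => ?_⟩
  obtain ⟨L, hL⟩ : ∃ L, (pathTo hT v).length = L := ⟨_, rfl⟩
  induction L using Nat.strong_induction_on generalizing v with
  | _ L ih =>
    by_cases hv : v = 0
    · exact ⟨0, hv⟩
    · have hlen := length_pathTo_parent hT hv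
      obtain ⟨k, hk⟩ := ih (pathTo hT (parent hT v)).length (by omega) (parent hT v) rfl
      exact ⟨k + 1, by rwa [Function.iterate_succ_apply]⟩

lemma toGraph_parent_le : toGraph (parent hT) ≤ T := by
  intro v w h
  rw [toGraph_adj] at h
  rcases h.2 with he | he
  · have hv : v ≠ 0 := by
      rintro rfl
      rw [parent_zero] at he
      exact h.1 he
    exact he ▸ parent_adj hT hv
  · have hw : w ≠ 0 := by
      rintro rfl
      rw [parent_zero] at he
      exact h.1 he.symm
    exact (he ▸ parent_adj hT hw).symm

lemma toGraph_parent (hn : 1 ≤ n) : toGraph (parent hT) = T := by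
  classical
  rw [← SimpleGraph.edgeFinset_inj]
  apply Finset.eq_of_subset_of_card_le
  · exact SimpleGraph.edgeFinset_mono (toGraph_parent_le hT)
  · have h1 : (toGraph (parent hT)).edgeFinset.card = n - 1 :=
      (good_parent hT).card_edgeFinset
    have h2 : T.edgeFinset.card + 1 = Fintype.card (Fin n) := hT.card_edgeFinset
    rw [Fintype.card_fin] at h2
    omega

end FromTree

lemma card_trees_eq_card_good :
    Nat.card {T : SimpleGraph (Fin n) // T.IsTree} = Nat.card {f : Fin n → Fin n // Good f} := by
  classical
  have hn : 1 ≤ n := Nat.pos_of_ne_zero (NeZero.ne n)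
  refine (Nat.card_eq_of_bijective
    (fun f : {f : Fin n → Fin n // Good f} => (⟨toGraph f.1, f.2.isTree⟩ :
      {T : SimpleGraph (Fin n) // T.IsTree})) ⟨?_, ?_⟩).symm
  · rintro ⟨f, hf⟩ ⟨g, hg⟩ h
    simpa using toGraph_injOn hf hg (by simpa using congrArg Subtype.val h)
  · rintro ⟨T, hT⟩
    exact ⟨⟨parent hT, good_parent hT⟩, by simp [toGraph_parent hT hn]⟩

section Prufer

def GoodOn (s : Finset (Fin n)) (f : Fin n → Fin n) : Prop :=
  f 0 = 0 ∧ (∀ v ∈ s, f v ∈ s) ∧ (∀ v ∉ s, f v = 0) ∧ (∀ v ∈ s, ∃ k, f^[k] v = 0)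

lemma goodOn_univ_iff {f : Fin n → Fin n} : GoodOn Finset.univ f ↔ Good f := by
  simp [GoodOn, Good]

lemma GoodOn.orbit_mem {s : Finset (Fin n)} {f : Fin n → Fin n} (hf : GoodOn s f)
    {v : Fin n} (hv : v ∈ s) (i : ℕ) : f^[i] v ∈ s := by
  induction i with
  | zero => simpa using hv
  | succ i ih => rw [Function.iterate_succ_apply']; exact hf.2.1 _ ih

lemma GoodOn.no_fix {s : Finset (Fin n)} {f : Fin n → Fin n} (hf : GoodOn s f)
    {v : Fin n} (hv : v ∈ s) (hv0 : v ≠ 0) : f v ≠ v := by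
  intro h
  obtain ⟨k, hk⟩ := hf.2.2.2 v hv
  rw [Function.iterate_fixed h] at hk
  exact hv0 hk

/-- f maps something in `s.erase 0` to 0, provided `s` has an element other than 0. -/
lemma GoodOn.exists_child_zero {s : Finset (Fin n)} {f : Fin n → Fin n} (hf : GoodOn s f)
    {v : Fin n} (hv : v ∈ s) (hv0 : v ≠ 0) : ∃ w ∈ s, w ≠ 0 ∧ f w = 0 := by
  have hex := hf.2.2.2 v hv
  classical
  set k := Nat.find hex with hk
  have hspec : f^[k] v = 0 := Nat.find_spec hex
  have hkne : k ≠ 0 := by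
    intro h0
    rw [h0] at hspec
    exact hv0 hspec
  refine ⟨f^[k-1] v, hf.orbit_mem hv _, ?_, ?_⟩
  · intro h0
    exact Nat.find_min hex (m := k - 1) (by omega) h0
  · have hsp : f^[k - 1 + 1] v = 0 := by rw [show k - 1 + 1 = k by omega]; exact hspec
    rwa [Function.iterate_succ_apply'] at hsp

def leafFinset (s : Finset (Fin n)) (f : Fin n → Fin n) : Finset (Fin n) :=
  s.filter (fun v => v ≠ 0 ∧ ∀ w ∈ s, f w ≠ v)

lemma mem_leafFinset {s : Finset (Fin n)} {f : Fin n → Fin n} {v : Fin n} :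
    v ∈ leafFinset s f ↔ v ∈ s ∧ v ≠ 0 ∧ ∀ w ∈ s, f w ≠ v := by
  simp [leafFinset]

lemma leafFinset_nonempty {s : Finset (Fin n)} {f : Fin n → Fin n} (hf : GoodOn s f)
    (h0 : 0 ∈ s) (hcard : 3 ≤ s.card) : (leafFinset s f).Nonempty := by
  classical
  set e := s.erase 0 with he
  set img := e.image f with himg
  obtain ⟨v₀, hv₀⟩ : ∃ v₀, v₀ ∈ e := by
    have : 0 < e.card := by rw [Finset.card_erase_of_mem h0]; omega
    exact Finset.card_pos.1 this
  have h0img : (0 : Fin n) ∈ img := by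
    obtain ⟨w, hw, hw0, hfw⟩ := hf.exists_child_zero (Finset.mem_of_mem_erase hv₀)
      (Finset.ne_of_mem_erase hv₀)
    exact Finset.mem_image.2 ⟨w, Finset.mem_erase.2 ⟨hw0, hw⟩, hfw⟩
  have hsub : leafFinset s f = e \ (img.erase 0) := by
    ext x
    rw [mem_leafFinset, Finset.mem_sdiff]
    constructor
    · rintro ⟨hx, hx0, hl⟩
      refine ⟨Finset.mem_erase.2 ⟨hx0, hx⟩, fun hmem => ?_⟩
      obtain ⟨w, hw, hfw⟩ := Finset.mem_image.1 (Finset.mem_of_mem_erase hmem)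
      exact hl w (Finset.mem_of_mem_erase hw) hfw
    · rintro ⟨hxe, hni⟩
      have hx := Finset.mem_of_mem_erase hxe
      have hx0 := Finset.ne_of_mem_erase hxe
      refine ⟨hx, hx0, fun w hw hfw => ?_⟩
      have hw0 : w ≠ 0 := by
        rintro rfl
        rw [hf.1] at hfw
        exact hx0 hfw.symm
      exact hni (Finset.mem_erase.2 ⟨hx0,
        Finset.mem_image.2 ⟨w, Finset.mem_erase.2 ⟨hw0, hw⟩, hfw⟩⟩)
  rw [hsub, ← Finset.card_pos]
  have h1 : e.card = s.card - 1 := Finset.card_erase_of_mem h0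
  have h2 : img.card ≤ e.card := Finset.card_image_le
  have h3 : (img.erase 0).card = img.card - 1 := Finset.card_erase_of_mem h0img
  have h4 : 0 < img.card := Finset.card_pos.2 ⟨0, h0img⟩
  have h5 := Finset.le_card_sdiff (img.erase 0) e
  omega

def pick (t : Finset (Fin n)) : Fin n := WithBot.unbotD 0 t.max

lemma pick_spec {t : Finset (Fin n)} (h : t.Nonempty) : pick t = t.max' h := by
  rw [pick, ← Finset.coe_max' h]; rfl

lemma pick_mem {t : Finset (Fin n)} (h : t.Nonempty) : pick t ∈ t := by
  rw [pick_spec h]; exact t.max'_mem h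

lemma le_pick {t : Finset (Fin n)} {a : Fin n} (ha : a ∈ t) : a ≤ pick t := by
  rw [pick_spec ⟨a, ha⟩]; exact Finset.le_max' t a ha

lemma pick_eq {t : Finset (Fin n)} {b : Fin n} (hb : b ∈ t) (hmax : ∀ a ∈ t, a ≤ b) :
    pick t = b :=
  le_antisymm (hmax _ (pick_mem ⟨b, hb⟩)) (le_pick hb)

lemma iterate_update_of_ne {f : Fin n → Fin n} {ℓ a v : Fin n}
    (h : ∀ i, f^[i] v ≠ ℓ) (k : ℕ) : (Function.update f ℓ a)^[k] v = f^[k] v := by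
  induction k with
  | zero => rfl
  | succ k ih =>
    rw [Function.iterate_succ_apply', Function.iterate_succ_apply', ih,
      Function.update_of_ne (h k)]

lemma GoodOn.step {s : Finset (Fin n)} {f : Fin n → Fin n} (hf : GoodOn s f)
    {ℓ : Fin n} (hℓs : ℓ ∈ s) (hℓ0 : ℓ ≠ 0) (hleaf : ∀ w ∈ s, f w ≠ ℓ) :
    GoodOn (s.erase ℓ) (Function.update f ℓ 0) := by
  have horb : ∀ v ∈ s.erase ℓ, ∀ i, f^[i] v ≠ ℓ := by
    intro v hv i
    cases i with
    | zero => exact Finset.ne_of_mem_erase hv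
    | succ i =>
      rw [Function.iterate_succ_apply']
      exact hleaf _ (hf.orbit_mem (Finset.mem_of_mem_erase hv) i)
  refine ⟨?_, ?_, ?_, ?_⟩
  · rw [Function.update_of_ne (Ne.symm hℓ0), hf.1]
  · intro v hv
    rw [Function.update_of_ne (Finset.ne_of_mem_erase hv)]
    exact Finset.mem_erase.2 ⟨hleaf _ (Finset.mem_of_mem_erase hv),
      hf.2.1 _ (Finset.mem_of_mem_erase hv)⟩
  · intro v hv
    by_cases hvℓ : v = ℓ
    · rw [hvℓ, Function.update_self]
    · rw [Function.update_of_ne hvℓ]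
      exact hf.2.2.1 v (fun hvs => hv (Finset.mem_erase.2 ⟨hvℓ, hvs⟩))
  · intro v hv
    obtain ⟨k, hk⟩ := hf.2.2.2 v (Finset.mem_of_mem_erase hv)
    exact ⟨k, by rw [iterate_update_of_ne (horb v hv), hk]⟩

def encodeAux : ℕ → Finset (Fin n) → (Fin n → Fin n) → List (Fin n)
  | 0, _, _ => []
  | k+1, s, f =>
    f (pick (leafFinset s f)) ::
      encodeAux k (s.erase (pick (leafFinset s f)))
        (Function.update f (pick (leafFinset s f)) 0)

def decodeAux : Finset (Fin n) → List (Fin n) → (Fin n → Fin n)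
  | _, [] => fun _ => 0
  | s, a :: t =>
    Function.update (decodeAux (s.erase (pick ((s.erase 0) \ (a :: t).toFinset))) t)
      (pick ((s.erase 0) \ (a :: t).toFinset)) a

lemma encodeAux_length (k : ℕ) (s : Finset (Fin n)) (f : Fin n → Fin n) :
    (encodeAux k s f).length = k := by
  induction k generalizing s f with
  | zero => rfl
  | succ k ih => simp [encodeAux, ih]


lemma pick_leaf_spec {s : Finset (Fin n)} {f : Fin n → Fin n} (hf : GoodOn s f)
    (h0 : 0 ∈ s) (hcard : 3 ≤ s.card) :
    pick (leafFinset s f) ∈ s ∧ pick (leafFinset s f) ≠ 0 ∧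
      ∀ w ∈ s, f w ≠ pick (leafFinset s f) :=
  mem_leafFinset.1 (pick_mem (leafFinset_nonempty hf h0 hcard))

lemma card_two_aux {s : Finset (Fin n)} (h0 : 0 ∈ s) (hcard : s.card = 2)
    {v w : Fin n} (hv : v ∈ s) (hw : w ∈ s) (hv0 : v ≠ 0) (hw0 : w ≠ 0) (hvw : v ≠ w) :
    False := by
  have hsub : ({0, v, w} : Finset (Fin n)) ⊆ s := by
    intro x hx
    simp only [Finset.mem_insert, Finset.mem_singleton] at hx
    rcases hx with rfl | rfl | rfl <;> assumption
  have hc : ({0, v, w} : Finset (Fin n)).card = 3 := by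
    rw [Finset.card_insert_of_notMem (by simp [Ne.symm hv0, Ne.symm hw0]),
      Finset.card_insert_of_notMem (by simp [hvw]), Finset.card_singleton]
  have := Finset.card_le_card hsub
  omega

lemma encodeAux_mem {k : ℕ} {s : Finset (Fin n)} {f : Fin n → Fin n} (hf : GoodOn s f)
    (h0 : 0 ∈ s) (hcard : s.card = k + 2) : ∀ x ∈ encodeAux k s f, x ∈ s := by
  induction k generalizing s f with
  | zero => simp [encodeAux]
  | succ k ih =>
    obtain ⟨hℓs, hℓ0, hleaf⟩ := pick_leaf_spec hf h0 (by omega)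
    set ℓ := pick (leafFinset s f)
    intro x hx
    rw [encodeAux, List.mem_cons] at hx
    rcases hx with rfl | hx
    · exact hf.2.1 _ hℓs
    · have h0' : (0 : Fin n) ∈ s.erase ℓ := Finset.mem_erase.2 ⟨Ne.symm hℓ0, h0⟩
      have hcard' : (s.erase ℓ).card = k + 2 := by
        rw [Finset.card_erase_of_mem hℓs]; omega
      exact Finset.mem_of_mem_erase (ih (hf.step hℓs hℓ0 hleaf) h0' hcard' x hx)

lemma mem_encodeAux_iff {k : ℕ} {s : Finset (Fin n)} {f : Fin n → Fin n} (hf : GoodOn s f)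
    (h0 : 0 ∈ s) (hcard : s.card = k + 2) {v : Fin n} (hv : v ∈ s) (hv0 : v ≠ 0) :
    v ∈ encodeAux k s f ↔ ∃ w ∈ s, f w = v := by
  induction k generalizing s f with
  | zero =>
    simp only [encodeAux, List.not_mem_nil, false_iff]
    rintro ⟨w, hw, hfw⟩
    have hw0 : w ≠ 0 := by rintro rfl; rw [hf.1] at hfw; exact hv0 hfw.symm
    have hwv : w ≠ v := by rintro rfl; exact hf.no_fix hw hw0 hfw
    exact card_two_aux h0 hcard hv hw hv0 hw0 (Ne.symm hwv)
  | succ k ih =>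
    obtain ⟨hℓs, hℓ0, hleaf⟩ := pick_leaf_spec hf h0 (by omega)
    set ℓ := pick (leafFinset s f) with hℓ
    have h0' : (0 : Fin n) ∈ s.erase ℓ := Finset.mem_erase.2 ⟨Ne.symm hℓ0, h0⟩
    have hcard' : (s.erase ℓ).card = k + 2 := by
      rw [Finset.card_erase_of_mem hℓs]; omega
    have hstep := hf.step hℓs hℓ0 hleaf
    rw [encodeAux, List.mem_cons]
    by_cases hvℓ : v = ℓ
    · constructor
      · rintro (h | h)
        · rw [hvℓ] at h
          exact absurd h.symm (hleaf _ hℓs)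
        · have hmem := encodeAux_mem hstep h0' hcard' _ h
          rw [hvℓ] at hmem
          exact absurd hmem (Finset.notMem_erase _ _)
      · rintro ⟨w, hw, hfw⟩
        rw [hvℓ] at hfw
        exact absurd hfw (hleaf _ hw)
    · have hv' : v ∈ s.erase ℓ := Finset.mem_erase.2 ⟨hvℓ, hv⟩
      rw [ih hstep h0' hcard' hv']
      constructor
      · rintro (h | ⟨w, hw, hfw⟩)
        · exact ⟨ℓ, hℓs, h.symm⟩
        · refine ⟨w, Finset.mem_of_mem_erase hw, ?_⟩
          rwa [Function.update_of_ne (Finset.ne_of_mem_erase hw)] at hfw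
      · rintro ⟨w, hw, hfw⟩
        by_cases hwℓ : w = ℓ
        · subst hwℓ
          exact Or.inl hfw.symm
        · refine Or.inr ⟨w, Finset.mem_erase.2 ⟨hwℓ, hw⟩, ?_⟩
          rwa [Function.update_of_ne hwℓ]


def pickD (s : Finset (Fin n)) (a : Fin n) (t : List (Fin n)) : Fin n :=
  pick ((s.erase 0) \ (a :: t).toFinset)

lemma decodeAux_cons {s : Finset (Fin n)} {a : Fin n} {t : List (Fin n)} :
    decodeAux s (a :: t) =
      Function.update (decodeAux (s.erase (pickD s a t)) t) (pickD s a t) a := rfl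

lemma pickD_spec {s : Finset (Fin n)} {a : Fin n} {t : List (Fin n)}
    (h0 : 0 ∈ s) (hcard : s.card = t.length + 3) :
    pickD s a t ∈ s ∧ pickD s a t ≠ 0 ∧ pickD s a t ∉ (a :: t) := by
  have hne : ((s.erase 0) \ (a :: t).toFinset).Nonempty := by
    rw [← Finset.card_pos]
    have h1 := Finset.le_card_sdiff ((a :: t).toFinset) (s.erase 0)
    have h2 : (a :: t).toFinset.card ≤ t.length + 1 := by
      simpa using (a :: t).toFinset_card_le
    have h3 : (s.erase 0).card = t.length + 2 := by
      rw [Finset.card_erase_of_mem h0]; omega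
    omega
  have h := pick_mem hne
  rw [Finset.mem_sdiff, Finset.mem_erase, List.mem_toFinset] at h
  exact ⟨h.1.2, h.1.1, h.2⟩

lemma decodeAux_goodOn {l : List (Fin n)} {s : Finset (Fin n)} (h0 : 0 ∈ s)
    (hval : ∀ x ∈ l, x ∈ s) (hcard : s.card = l.length + 2) :
    GoodOn s (decodeAux s l) := by
  induction l generalizing s with
  | nil => exact ⟨rfl, fun v _ => h0, fun _ _ => rfl, fun v _ => ⟨1, rfl⟩⟩
  | cons a t ih =>
    simp only [List.length_cons] at hcard
    obtain ⟨hℓs, hℓ0, hℓnt⟩ := pickD_spec h0 (by omega) (a := a) (t := t)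
    set ℓ := pickD s a t with hℓdef
    have h0' : (0 : Fin n) ∈ s.erase ℓ := Finset.mem_erase.2 ⟨Ne.symm hℓ0, h0⟩
    have hval' : ∀ x ∈ t, x ∈ s.erase ℓ := fun x hx => Finset.mem_erase.2
      ⟨fun h => hℓnt (h ▸ List.mem_cons_of_mem a hx), hval x (List.mem_cons_of_mem a hx)⟩
    have hcard' : (s.erase ℓ).card = t.length + 2 := by
      rw [Finset.card_erase_of_mem hℓs]; omega
    have hf' := ih h0' hval' hcard'
    set f' := decodeAux (s.erase ℓ) t with hf'def
    have has : a ∈ s := hval a (List.mem_cons_self)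
    have haℓ : a ≠ ℓ := fun h => hℓnt (h ▸ List.mem_cons_self)
    have horb : ∀ u ∈ s.erase ℓ, ∀ i, f'^[i] u ≠ ℓ := fun u hu i =>
      Finset.ne_of_mem_erase (hf'.orbit_mem hu i)
    rw [decodeAux_cons, ← hℓdef, ← hf'def]
    refine ⟨?_, ?_, ?_, ?_⟩
    · rw [Function.update_of_ne (Ne.symm hℓ0), hf'.1]
    · intro v hv
      by_cases hvℓ : v = ℓ
      · rw [hvℓ, Function.update_self]; exact has
      · rw [Function.update_of_ne hvℓ]
        exact Finset.mem_of_mem_erase (hf'.2.1 _ (Finset.mem_erase.2 ⟨hvℓ, hv⟩))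
    · intro v hv
      have hvℓ : v ≠ ℓ := fun h => hv (h ▸ hℓs)
      rw [Function.update_of_ne hvℓ]
      exact hf'.2.2.1 v (fun hm => hv (Finset.mem_of_mem_erase hm))
    · intro v hv
      by_cases hvℓ : v = ℓ
      · have ha' : a ∈ s.erase ℓ := Finset.mem_erase.2 ⟨haℓ, has⟩
        obtain ⟨k, hk⟩ := hf'.2.2.2 a ha'
        refine ⟨k + 1, ?_⟩
        rw [Function.iterate_succ_apply, hvℓ, Function.update_self,
          iterate_update_of_ne (horb a ha'), hk]
      · have hv' : v ∈ s.erase ℓ := Finset.mem_erase.2 ⟨hvℓ, hv⟩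
        obtain ⟨k, hk⟩ := hf'.2.2.2 v hv'
        exact ⟨k, by rw [iterate_update_of_ne (horb v hv'), hk]⟩

lemma decodeAux_children {l : List (Fin n)} {s : Finset (Fin n)} (h0 : 0 ∈ s)
    (hval : ∀ x ∈ l, x ∈ s) (hcard : s.card = l.length + 2) :
    ∀ v ∈ l, ∃ w ∈ s, (decodeAux s l) w = v := by
  induction l generalizing s with
  | nil => simp
  | cons a t ih =>
    simp only [List.length_cons] at hcard
    obtain ⟨hℓs, hℓ0, hℓnt⟩ := pickD_spec h0 (by omega) (a := a) (t := t)
    set ℓ := pickD s a t with hℓdef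
    have h0' : (0 : Fin n) ∈ s.erase ℓ := Finset.mem_erase.2 ⟨Ne.symm hℓ0, h0⟩
    have hval' : ∀ x ∈ t, x ∈ s.erase ℓ := fun x hx => Finset.mem_erase.2
      ⟨fun h => hℓnt (h ▸ List.mem_cons_of_mem a hx), hval x (List.mem_cons_of_mem a hx)⟩
    have hcard' : (s.erase ℓ).card = t.length + 2 := by
      rw [Finset.card_erase_of_mem hℓs]; omega
    intro v hv
    rw [List.mem_cons] at hv
    rw [decodeAux_cons, ← hℓdef]
    rcases hv with rfl | hv
    · exact ⟨ℓ, hℓs, Function.update_self _ _ _⟩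
    · obtain ⟨w, hw, hfw⟩ := ih h0' hval' hcard' v hv
      refine ⟨w, Finset.mem_of_mem_erase hw, ?_⟩
      rw [Function.update_of_ne (Finset.ne_of_mem_erase hw), hfw]


lemma decode_encode {k : ℕ} {s : Finset (Fin n)} {f : Fin n → Fin n} (hf : GoodOn s f)
    (h0 : 0 ∈ s) (hcard : s.card = k + 2) : decodeAux s (encodeAux k s f) = f := by
  induction k generalizing s f with
  | zero =>
    funext v
    show (0 : Fin n) = f v
    by_cases hv : v ∈ s
    · by_cases hv0 : v = 0
      · rw [hv0, hf.1]
      · by_cases h1 : f v = 0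
        · rw [h1]
        · exfalso
          have h2 : f v ≠ v := hf.no_fix hv hv0
          exact card_two_aux h0 hcard hv (hf.2.1 v hv) hv0 h1 (Ne.symm h2)
    · rw [hf.2.2.1 v hv]
  | succ k ih =>
    obtain ⟨hℓs, hℓ0, hleaf⟩ := pick_leaf_spec hf h0 (by omega)
    set ℓ := pick (leafFinset s f) with hℓdef
    have h0' : (0 : Fin n) ∈ s.erase ℓ := Finset.mem_erase.2 ⟨Ne.symm hℓ0, h0⟩
    have hcard' : (s.erase ℓ).card = k + 2 := by
      rw [Finset.card_erase_of_mem hℓs]; omega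
    have hstep := hf.step hℓs hℓ0 hleaf
    set f' := Function.update f ℓ 0 with hf'def
    set t := encodeAux k (s.erase ℓ) f' with htdef
    have henc : encodeAux (k + 1) s f = f ℓ :: t := rfl
    rw [henc, decodeAux_cons]
    have hsets : (s.erase 0) \ ((f ℓ :: t).toFinset) = leafFinset s f := by
      ext v
      rw [Finset.mem_sdiff, Finset.mem_erase, List.mem_toFinset, mem_leafFinset]
      constructor
      · rintro ⟨⟨hv0, hvs⟩, hnotin⟩
        refine ⟨hvs, hv0, fun w hw hfw => hnotin ?_⟩
        rw [← henc]
        exact (mem_encodeAux_iff hf h0 hcard hvs hv0).2 ⟨w, hw, hfw⟩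
      · rintro ⟨hvs, hv0, hleafv⟩
        refine ⟨⟨hv0, hvs⟩, fun hin => ?_⟩
        rw [← henc] at hin
        obtain ⟨w, hw, hfw⟩ := (mem_encodeAux_iff hf h0 hcard hvs hv0).1 hin
        exact hleafv w hw hfw
    have hpickD : pickD s (f ℓ) t = ℓ := by rw [pickD, hsets, hℓdef]
    rw [hpickD]
    have hdec : decodeAux (s.erase ℓ) t = f' := ih hstep h0' hcard'
    rw [hdec]
    funext v
    by_cases hvℓ : v = ℓ
    · rw [hvℓ, Function.update_self]
    · rw [Function.update_of_ne hvℓ, hf'def, Function.update_of_ne hvℓ]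

lemma encode_decode {l : List (Fin n)} {s : Finset (Fin n)} (h0 : 0 ∈ s)
    (hval : ∀ x ∈ l, x ∈ s) (hcard : s.card = l.length + 2) :
    encodeAux l.length s (decodeAux s l) = l := by
  induction l generalizing s with
  | nil => rfl
  | cons a t ih =>
    simp only [List.length_cons] at hcard ⊢
    obtain ⟨hℓs, hℓ0, hℓnt⟩ := pickD_spec h0 (by omega) (a := a) (t := t)
    set ℓ := pickD s a t with hℓdef
    have h0' : (0 : Fin n) ∈ s.erase ℓ := Finset.mem_erase.2 ⟨Ne.symm hℓ0, h0⟩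
    have hval' : ∀ x ∈ t, x ∈ s.erase ℓ := fun x hx => Finset.mem_erase.2
      ⟨fun h => hℓnt (h ▸ List.mem_cons_of_mem a hx), hval x (List.mem_cons_of_mem a hx)⟩
    have hcard' : (s.erase ℓ).card = t.length + 2 := by
      rw [Finset.card_erase_of_mem hℓs]; omega
    have hf' := decodeAux_goodOn h0' hval' hcard'
    set f' := decodeAux (s.erase ℓ) t with hf'def
    have has : a ∈ s := hval a (List.mem_cons_self)
    have haℓ : a ≠ ℓ := fun h => hℓnt (h ▸ List.mem_cons_self)
    set f := Function.update f' ℓ a with hfdef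
    have hdec : decodeAux s (a :: t) = f := by
      rw [decodeAux_cons, ← hℓdef, ← hf'def, hfdef]
    rw [hdec]
    have hmemleaf : ℓ ∈ leafFinset s f := by
      rw [mem_leafFinset]
      refine ⟨hℓs, hℓ0, fun w hw => ?_⟩
      by_cases hwℓ : w = ℓ
      · rw [hwℓ, hfdef, Function.update_self]
        exact haℓ
      · rw [hfdef, Function.update_of_ne hwℓ]
        exact Finset.ne_of_mem_erase (hf'.2.1 w (Finset.mem_erase.2 ⟨hwℓ, hw⟩))
    have hmax : ∀ v ∈ leafFinset s f, v ≤ ℓ := by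
      intro v hv
      rw [mem_leafFinset] at hv
      obtain ⟨hvs, hv0, hleafv⟩ := hv
      by_cases hvl : v ∈ (a :: t)
      · exfalso
        rcases List.mem_cons.1 hvl with rfl | hvt
        · exact hleafv ℓ hℓs (by rw [hfdef, Function.update_self])
        · obtain ⟨w, hw, hfw⟩ := decodeAux_children h0' hval' hcard' v hvt
          exact hleafv w (Finset.mem_of_mem_erase hw)
            (by rw [hfdef, Function.update_of_ne (Finset.ne_of_mem_erase hw)]; exact hfw)
      · exact le_pick (Finset.mem_sdiff.2 ⟨Finset.mem_erase.2 ⟨hv0, hvs⟩,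
          by rwa [List.mem_toFinset]⟩)
    have hpick : pick (leafFinset s f) = ℓ := pick_eq hmemleaf hmax
    have henc : encodeAux (t.length + 1) s f
        = f ℓ :: encodeAux t.length (s.erase ℓ) (Function.update f ℓ 0) := by
      rw [encodeAux, hpick]
    rw [henc]
    have h1 : f ℓ = a := by rw [hfdef, Function.update_self]
    have h2 : Function.update f ℓ 0 = f' := by
      funext v
      by_cases hvℓ : v = ℓ
      · rw [hvℓ, Function.update_self]
        exact (hf'.2.2.1 ℓ (Finset.notMem_erase ℓ s)).symm
      · rw [Function.update_of_ne hvℓ, hfdef, Function.update_of_ne hvℓ]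
    rw [h1, h2, ih h0' hval' hcard']


lemma card_goodOn (s : Finset (Fin n)) (h0 : 0 ∈ s) :
    Nat.card {f : Fin n → Fin n // GoodOn s f} = s.card ^ (s.card - 2) := by
  classical
  rcases Nat.lt_or_ge s.card 2 with hlt | hge
  · have hc : s.card = 1 := by
      have : 0 < s.card := Finset.card_pos.2 ⟨0, h0⟩
      omega
    have hgood : ∀ f : Fin n → Fin n, GoodOn s f ↔ f = fun _ => (0 : Fin n) := by
      intro f
      constructor
      · intro hf
        funext v
        by_cases hv : v ∈ s
        · obtain ⟨a, ha⟩ := Finset.card_eq_one.1 hc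
          rw [ha, Finset.mem_singleton] at h0 hv
          rw [hv, ← h0, hf.1]
        · exact hf.2.2.1 v hv
      · rintro rfl
        exact ⟨rfl, fun v _ => h0, fun _ _ => rfl, fun v _ => ⟨1, rfl⟩⟩
    rw [hc]
    have h1 : (1 : ℕ) ^ (1 - 2) = 1 := by norm_num
    rw [h1, Nat.card_eq_one_iff_unique]
    constructor
    · constructor
      rintro ⟨f, hf⟩ ⟨g, hg⟩
      apply Subtype.ext
      show f = g
      rw [(hgood f).1 hf, (hgood g).1 hg]
    · exact ⟨⟨_, (hgood _).2 rfl⟩⟩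
  · obtain ⟨k, hk⟩ : ∃ k, s.card = k + 2 := ⟨s.card - 2, by omega⟩
    have e1 : {f : Fin n → Fin n // GoodOn s f} ≃
        {l : List (Fin n) // l.length = k ∧ ∀ x ∈ l, x ∈ s} :=
      { toFun := fun f => ⟨encodeAux k s f.1, encodeAux_length k s f.1,
          encodeAux_mem f.2 h0 hk⟩
        invFun := fun l => ⟨decodeAux s l.1,
          decodeAux_goodOn h0 l.2.2 (by rw [l.2.1]; exact hk)⟩
        left_inv := fun f => Subtype.ext (decode_encode f.2 h0 hk)
        right_inv := fun l => Subtype.ext (by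
          have h := encode_decode h0 l.2.2 (by rw [l.2.1]; exact hk)
          rwa [l.2.1] at h) }
    have e2 : {l : List (Fin n) // l.length = k ∧ ∀ x ∈ l, x ∈ s} ≃ (Fin k → {x // x ∈ s}) :=
      { toFun := fun l i => ⟨l.1.get (Fin.cast l.2.1.symm i), l.2.2 _ (List.get_mem _ _)⟩
        invFun := fun g => ⟨List.ofFn (fun i => (g i : Fin n)), by simp, by
          intro x hx
          rw [List.mem_ofFn] at hx
          obtain ⟨i, rfl⟩ := hx
          exact (g i).2⟩
        left_inv := fun l => Subtype.ext (by
          apply List.ext_get (by simp [l.2.1])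
          intro i h1 h2
          simp [List.get_ofFn])
        right_inv := fun g => by
          funext i
          apply Subtype.ext
          simp [List.get_ofFn] }
    rw [Nat.card_congr (e1.trans e2), Nat.card_eq_fintype_card, Fintype.card_fun,
      Fintype.card_coe, Fintype.card_fin]
    have hk2 : s.card - 2 = k := by omega
    rw [hk2]

lemma card_good : Nat.card {f : Fin n → Fin n // Good f} = n ^ (n - 2) := by
  have h := card_goodOn (Finset.univ : Finset (Fin n)) (Finset.mem_univ 0)
  rw [Finset.card_univ, Fintype.card_fin] at h
  rw [← h]
  exact Nat.card_congr (Equiv.subtypeEquivRight (fun f => goodOn_univ_iff.symm))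

end Prufer

end Cayley

theorem cayley_formula (n : ℕ) (hn : 1 ≤ n) :
    Nat.card {T : SimpleGraph (Fin n) // T.IsTree} = n ^ (n - 2) := by
  have : NeZero n := ⟨by omega⟩
  rw [Cayley.card_trees_eq_card_good, Cayley.card_good]
end

section
/- The number of rooted labelled trees on the vertex set {1,...,n} (a tree together with a distinguished root vertex) is n^(n-1). -/
open Function

open scoped Classical

/-- `(p, r)` is a tree function: `r` is fixed and every vertex reaches `r`. -/
def IsTreeFun {α : Type*} (p : α → α) (r : α) : Prop :=
  p r = r ∧ ∀ v, ∃ k, p^[k] v = r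

section Depth

variable {α : Type*} {p : α → α} {r : α}

/-- depth of `v`: least `k` with `p^[k] v = r` (junk if unreachable). -/
noncomputable def depth (p : α → α) (r v : α) : ℕ :=
  if h : ∃ k, p^[k] v = r then Nat.find h else 0

lemma depth_spec {v : α} (h : ∃ k, p^[k] v = r) : p^[depth p r v] v = r := by
  rw [depth, dif_pos h]; exact Nat.find_spec h

lemma depth_le {v : α} {k : ℕ} (hk : p^[k] v = r) : depth p r v ≤ k := by
  rw [depth, dif_pos ⟨k, hk⟩]; exact Nat.find_le hk

@[simp] lemma depth_root (hr : p r = r) : depth p r r = 0 :=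
  Nat.le_zero.1 (depth_le (k := 0) rfl)

lemma depth_succ {v : α} (h : ∃ k, p^[k] v = r) (hv : v ≠ r) :
    depth p r v = depth p r (p v) + 1 := by
  have h0 : depth p r v ≠ 0 := by
    intro h0
    have := depth_spec h
    rw [h0] at this; exact hv this
  have hd : p^[depth p r v - 1] (p v) = r := by
    rw [← Function.iterate_succ_apply, Nat.succ_eq_add_one,
      Nat.sub_add_cancel (Nat.one_le_iff_ne_zero.2 h0)]
    exact depth_spec h
  have h1 : depth p r v ≤ depth p r (p v) + 1 :=
    depth_le (by rw [Function.iterate_succ_apply]; exact depth_spec ⟨_, hd⟩)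
  have h2 : depth p r (p v) ≤ depth p r v - 1 := depth_le hd
  omega

lemma depth_ne_root {v : α} (h : ∃ k, p^[k] v = r) (hv : v ≠ r) :
    depth p r (p v) < depth p r v := by
  rw [depth_succ h hv]; omega

lemma depth_iterate (hp : IsTreeFun p r) (v : α) (i : ℕ) (hi : i ≤ depth p r v) :
    depth p r (p^[i] v) = depth p r v - i := by
  induction i with
  | zero => simp
  | succ i ih =>
    have hvr : p^[i] v ≠ r := by
      intro hvr
      have := depth_le hvr
      omega
    rw [Function.iterate_succ_apply']
    have := depth_succ (hp.2 (p^[i] v)) hvr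
    rw [ih (by omega)] at this
    omega

/-- the iterates up to depth are injective (as indices). -/
lemma depth_iterate_inj (hp : IsTreeFun p r) (v : α) {i j : ℕ}
    (hi : i ≤ depth p r v) (hj : j ≤ depth p r v) (hij : p^[i] v = p^[j] v) : i = j := by
  have h1 := depth_iterate hp v i hi
  have h2 := depth_iterate hp v j hj
  rw [hij, h2] at h1
  omega

end Depth

section Per

variable {α : Type*} [Fintype α] {f : α → α}

/-- The finset of periodic points of `f`. -/
noncomputable def per (f : α → α) : Finset α :=
  Finset.univ.filter (fun x => ∃ k, 0 < k ∧ f^[k] x = x)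

lemma mem_per {x : α} : x ∈ per f ↔ ∃ k, 0 < k ∧ f^[k] x = x := by
  simp [per]

lemma exists_iterate_mem_per (f : α → α) (x : α) : ∃ j, f^[j] x ∈ per f := by
  obtain ⟨a, b, hab, h⟩ := Finite.exists_ne_map_eq_of_infinite (fun i : ℕ => f^[i] x)
  rcases hab.lt_or_gt with h' | h'
  · exact ⟨a, mem_per.2 ⟨b - a, by omega, by
      rw [← Function.iterate_add_apply, Nat.sub_add_cancel h'.le, ← h]⟩⟩
  · exact ⟨b, mem_per.2 ⟨a - b, by omega, by
      rw [← Function.iterate_add_apply, Nat.sub_add_cancel h'.le, h]⟩⟩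

lemma per_nonempty (f : α → α) [Nonempty α] : (per f).Nonempty := by
  obtain ⟨j, hj⟩ := exists_iterate_mem_per f (Classical.arbitrary α)
  exact ⟨_, hj⟩

lemma mem_per_apply {x : α} (hx : x ∈ per f) : f x ∈ per f := by
  obtain ⟨k, hk, hfk⟩ := mem_per.1 hx
  exact mem_per.2 ⟨k, hk, by rw [← Function.iterate_succ_apply, Function.iterate_succ_apply', hfk]⟩

lemma per_injOn : Set.InjOn f (per f) := by
  intro x hx y hy hxy
  obtain ⟨a, ha, hfa⟩ := mem_per.1 hx
  obtain ⟨b, hb, hfb⟩ := mem_per.1 hy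
  have hX : f^[a * b] x = x := by
    rw [Function.iterate_mul]; exact Function.iterate_fixed hfa b
  have hY : f^[a * b] y = y := by
    rw [mul_comm, Function.iterate_mul]; exact Function.iterate_fixed hfb a
  have hpos : 0 < a * b := Nat.mul_pos ha hb
  calc x = f^[a * b] x := hX.symm
    _ = f^[a * b - 1] (f x) := by
        rw [← Function.iterate_succ_apply, Nat.succ_eq_add_one, Nat.sub_add_cancel hpos]
    _ = f^[a * b - 1] (f y) := by rw [hxy]
    _ = f^[a * b] y := by
        rw [← Function.iterate_succ_apply, Nat.succ_eq_add_one, Nat.sub_add_cancel hpos]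
    _ = y := hY

lemma per_image : (per f).image f = per f := by
  apply Finset.eq_of_subset_of_card_le
  · intro x hx
    obtain ⟨y, hy, rfl⟩ := Finset.mem_image.1 hx
    exact mem_per_apply hy
  · rw [Finset.card_image_of_injOn per_injOn]

lemma exists_per_preimage {x : α} (hx : x ∈ per f) : ∃ y ∈ per f, f y = x := by
  have : x ∈ (per f).image f := by rw [per_image]; exact hx
  obtain ⟨a, ha, h⟩ := Finset.mem_image.1 this
  exact ⟨a, ha, h⟩

/-- in an `f`-invariant set on which `f` is injective, every point is periodic. -/
lemma mem_per_of_invariant {A : Finset α} (hmap : ∀ x ∈ A, f x ∈ A)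
    (hinj : Set.InjOn f A) {x : α} (hx : x ∈ A) : x ∈ per f := by
  have hiter : ∀ (i : ℕ) (y : α), y ∈ A → f^[i] y ∈ A := by
    intro i
    induction i with
    | zero => simp
    | succ i ih => intro y hy; rw [Function.iterate_succ_apply]; exact ih _ (hmap _ hy)
  have hcancel : ∀ (a : ℕ) (y z : α), y ∈ A → z ∈ A → f^[a] y = f^[a] z → y = z := by
    intro a
    induction a with
    | zero => intro y z _ _ h; simpa using h
    | succ a ih =>
      intro y z hy hz h
      rw [Function.iterate_succ_apply, Function.iterate_succ_apply] at h
      exact hinj hy hz (ih _ _ (hmap _ hy) (hmap _ hz) h)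
  obtain ⟨a, b, hab, h⟩ := Finite.exists_ne_map_eq_of_infinite (fun i : ℕ => f^[i] x)
  rcases hab.lt_or_gt with h' | h'
  · have key : f^[a] (f^[b - a] x) = f^[a] x := by
      rw [← Function.iterate_add_apply, show a + (b - a) = b by omega]
      exact h.symm
    exact mem_per.2 ⟨b - a, by omega, hcancel a _ _ (hiter _ _ hx) hx key⟩
  · have key : f^[b] (f^[a - b] x) = f^[b] x := by
      rw [← Function.iterate_add_apply, show b + (a - b) = a by omega]
      exact h
    exact mem_per.2 ⟨a - b, by omega, hcancel b _ _ (hiter _ _ hx) hx key⟩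

/-- if `x` is `f`-periodic, `A` is `f`-invariant, and `x ∉ A`, no iterate of `x` is in `A`. -/
lemma iterate_not_mem_of_per {A : Finset α} (hmap : ∀ x ∈ A, f x ∈ A)
    {x : α} (hx : x ∈ per f) (hxA : x ∉ A) : ∀ i, f^[i] x ∉ A := by
  have hiter : ∀ (i : ℕ) (y : α), y ∈ A → f^[i] y ∈ A := by
    intro i
    induction i with
    | zero => simp
    | succ i ih => intro y hy; rw [Function.iterate_succ_apply]; exact ih _ (hmap _ hy)
  obtain ⟨c, hc, hfc⟩ := mem_per.1 hx
  intro i hi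
  apply hxA
  have hmult : f^[i * c] x = x := by
    rw [mul_comm, Function.iterate_mul]; exact Function.iterate_fixed hfc i
  have : f^[i * c - i] (f^[i] x) = x := by
    rw [← Function.iterate_add_apply, show i * c - i + i = i * c from by
      have : i ≤ i * c := Nat.le_mul_of_pos_right i hc; omega]
    exact hmult
  rw [← this]
  exact hiter _ _ hi

end Per

section Joyal

variable {α : Type*} [Fintype α] [LinearOrder α] [Nonempty α]

/-- Joyal: the path list of `f`, i.e. the sorted periodic points pushed through `f`. -/
noncomputable def pList (f : α → α) : List α := ((per f).sort (· ≤ ·)).map f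

/-- Joyal forward: the tree function associated to `f`. -/
noncomputable def jG (f : α → α) : α → α := fun x =>
  if x ∈ pList f then (pList f).getD ((pList f).idxOf x + 1) x else f x

/-- Joyal forward: the root. -/
noncomputable def jR (f : α → α) : α :=
  (pList f).getD ((pList f).length - 1) (Classical.arbitrary α)

/-- Joyal forward: the marked vertex. -/
noncomputable def jB (f : α → α) : α := (pList f).getD 0 (Classical.arbitrary α)

variable {f : α → α}

lemma pList_length : (pList f).length = (per f).card := by
  rw [pList, List.length_map, Finset.length_sort]

lemma pList_length_pos : 0 < (pList f).length := by
  rw [pList_length]; exact Finset.card_pos.2 (per_nonempty f)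

lemma pList_nodup : (pList f).Nodup := by
  refine List.Nodup.map_on ?_ ((per f).sort_nodup (· ≤ ·))
  intro x hx y hy
  exact per_injOn ((Finset.mem_sort _).1 hx) ((Finset.mem_sort _).1 hy)

lemma mem_pList {x : α} : x ∈ pList f ↔ x ∈ per f := by
  rw [pList]
  constructor
  · rintro hx
    obtain ⟨a, ha, rfl⟩ := List.mem_map.1 hx
    exact mem_per_apply ((Finset.mem_sort _).1 ha)
  · intro hx
    obtain ⟨a, ha, rfl⟩ := exists_per_preimage hx
    exact List.mem_map.2 ⟨a, (Finset.mem_sort _).2 ha, rfl⟩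

lemma pList_elem {i : ℕ} (hi : i < (pList f).length) :
    (pList f)[i] = f (((per f).sort (· ≤ ·))[i]'(by
      rw [Finset.length_sort]; rwa [pList_length] at hi)) :=
  List.getElem_map f

lemma jG_elem {i : ℕ} (h2 : i + 1 < (pList f).length) :
    jG f ((pList f)[i]'(by omega)) = (pList f)[i + 1] := by
  rw [jG, if_pos (List.getElem_mem _), List.Nodup.idxOf_getElem pList_nodup i (by omega),
    List.getD_eq_getElem _ _ h2]

lemma jG_elem_last {i : ℕ} (h2 : i + 1 = (pList f).length) :
    jG f ((pList f)[i]'(by omega)) = (pList f)[i]'(by omega) := by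
  rw [jG, if_pos (List.getElem_mem _), List.Nodup.idxOf_getElem pList_nodup i (by omega),
    List.getD_eq_default _ _ (by omega)]

lemma jG_not_per {x : α} (hx : x ∉ per f) : jG f x = f x := by
  rw [jG, if_neg (fun h => hx (mem_pList.1 h))]

lemma jR_eq : jR f = (pList f)[(pList f).length - 1]'(by have := pList_length_pos (f := f); omega) := by
  rw [jR, List.getD_eq_getElem]

lemma jB_eq : jB f = (pList f)[0]'pList_length_pos := by
  rw [jB, List.getD_eq_getElem]

lemma jG_iterate {i j : ℕ} (hij : i + j < (pList f).length) :
    (jG f)^[j] ((pList f)[i]'(by omega)) = (pList f)[i + j] := by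
  induction j with
  | zero => simp
  | succ j ih =>
    rw [Function.iterate_succ_apply', ih (by omega), jG_elem (by omega)]
    simp only [Nat.add_succ]

lemma jG_reach_of_per {v : α} (hv : v ∈ per f) : ∃ m, (jG f)^[m] v = jR f := by
  have hv' : v ∈ pList f := mem_pList.2 hv
  set i := (pList f).idxOf v with hi
  have hilt : i < (pList f).length := List.idxOf_lt_length_iff.2 hv'
  refine ⟨(pList f).length - 1 - i, ?_⟩
  have hvi : v = (pList f)[i]'hilt := (List.getElem_idxOf hilt).symm
  rw [hvi, jG_iterate (by omega), jR_eq]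
  congr 1
  omega

lemma isTreeFun_jG (f : α → α) : IsTreeFun (jG f) (jR f) := by
  constructor
  · rw [jR_eq]
    exact jG_elem_last (by have := pList_length_pos (f := f); omega)
  · have key : ∀ (j : ℕ) (v : α), f^[j] v ∈ per f → ∃ m, (jG f)^[m] v = jR f := by
      intro j
      induction j with
      | zero =>
        intro v hv
        simp only [Function.iterate_zero, id] at hv
        exact jG_reach_of_per hv
      | succ j ih =>
        intro v hv
        by_cases hvp : v ∈ per f
        · exact jG_reach_of_per hvp
        · rw [Function.iterate_succ_apply] at hv
          obtain ⟨m, hm⟩ := ih (f v) hv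
          exact ⟨m + 1, by rw [Function.iterate_succ_apply, jG_not_per hvp]; exact hm⟩
    intro v
    obtain ⟨j, hj⟩ := exists_iterate_mem_per f v
    exact key j v hj

/-- Joyal backward: the path from `b` to the root `r` under `g`. -/
noncomputable def qList (g : α → α) (r b : α) : List α :=
  (List.range (depth g r b + 1)).map (g^[·] b)

/-- sorted version of the path. -/
noncomputable def sList (g : α → α) (r b : α) : List α :=
  (qList g r b).toFinset.sort (· ≤ ·)

/-- Joyal backward: the function associated to a tree function with a mark. -/
noncomputable def jF (g : α → α) (r b : α) : α → α := fun x =>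
  if x ∈ sList g r b then (qList g r b).getD ((sList g r b).idxOf x) x else g x

variable {g : α → α} {r b : α}

lemma q_length : (qList g r b).length = depth g r b + 1 := by
  rw [qList, List.length_map, List.length_range]

lemma q_elem {i : ℕ} (hi : i < (qList g r b).length) : (qList g r b)[i] = g^[i] b := by
  simp only [qList, List.getElem_map, List.getElem_range]

lemma q_nodup (hg : IsTreeFun g r) : (qList g r b).Nodup := by
  refine List.Nodup.map_on ?_ List.nodup_range
  intro x hx y hy hxy
  rw [List.mem_range] at hx hy
  have hd := q_length (g := g) (r := r) (b := b)
  exact depth_iterate_inj hg b (by omega) (by omega) hxy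

lemma s_mem {x : α} : x ∈ sList g r b ↔ x ∈ qList g r b := by
  rw [sList, Finset.mem_sort, List.mem_toFinset]

lemma s_length (hg : IsTreeFun g r) : (sList g r b).length = (qList g r b).length := by
  rw [sList, Finset.length_sort, List.toFinset_card_of_nodup (q_nodup hg)]

lemma s_nodup : (sList g r b).Nodup := Finset.sort_nodup _ _

lemma jF_elem (hg : IsTreeFun g r) {i : ℕ} (hi : i < (sList g r b).length) :
    jF g r b ((sList g r b)[i]) = (qList g r b)[i]'(by rw [← s_length hg]; exact hi) := by
  rw [jF, if_pos (List.getElem_mem _), List.Nodup.idxOf_getElem s_nodup i hi,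
    List.getD_eq_getElem]

lemma jF_not_mem {x : α} (hx : x ∉ qList g r b) : jF g r b x = g x := by
  rw [jF, if_neg (fun h => hx (s_mem.1 h))]

lemma r_mem_q (hg : IsTreeFun g r) : r ∈ qList g r b ∧
    (qList g r b)[(qList g r b).length - 1]'(by rw [q_length]; omega) = r := by
  have h1 : (qList g r b).length - 1 < (qList g r b).length := by rw [q_length]; omega
  have h2 : (qList g r b)[(qList g r b).length - 1]'h1 = r := by
    rw [q_elem h1, q_length]
    simpa using depth_spec (hg.2 b)
  exact ⟨List.mem_iff_getElem.2 ⟨_, h1, h2⟩, h2⟩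

lemma q_maps (hg : IsTreeFun g r) : ∀ x ∈ (qList g r b).toFinset, jF g r b x ∈ (qList g r b).toFinset := by
  intro x hx
  rw [List.mem_toFinset] at hx
  have hx' : x ∈ sList g r b := s_mem.2 hx
  have hi : (sList g r b).idxOf x < (sList g r b).length := List.idxOf_lt_length_iff.2 hx'
  have : x = (sList g r b)[(sList g r b).idxOf x]'hi := (List.getElem_idxOf hi).symm
  rw [this, jF_elem hg hi, List.mem_toFinset]
  exact List.getElem_mem _

lemma q_injOn (hg : IsTreeFun g r) : Set.InjOn (jF g r b) (qList g r b).toFinset := by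
  intro x hx y hy hxy
  simp only [Finset.mem_coe, List.mem_toFinset] at hx hy
  have hx' : x ∈ sList g r b := s_mem.2 hx
  have hy' : y ∈ sList g r b := s_mem.2 hy
  have hix : (sList g r b).idxOf x < (sList g r b).length := List.idxOf_lt_length_iff.2 hx'
  have hiy : (sList g r b).idxOf y < (sList g r b).length := List.idxOf_lt_length_iff.2 hy'
  have ex : x = (sList g r b)[(sList g r b).idxOf x]'hix := (List.getElem_idxOf hix).symm
  have ey : y = (sList g r b)[(sList g r b).idxOf y]'hiy := (List.getElem_idxOf hiy).symm
  rw [ex, jF_elem hg hix] at hxy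
  rw [ey, jF_elem hg hiy] at hxy
  have := (List.Nodup.getElem_inj_iff (q_nodup (b := b) hg)).1 hxy
  exact (List.idxOf_inj hx').1 this

lemma per_jF (hg : IsTreeFun g r) : per (jF g r b) = (qList g r b).toFinset := by
  apply Finset.Subset.antisymm
  · intro x hx
    by_contra hxA
    have hnot := iterate_not_mem_of_per (q_maps hg) hx hxA
    have hgit : ∀ i, (jF g r b)^[i] x = g^[i] x := by
      intro i
      induction i with
      | zero => rfl
      | succ i ih =>
        rw [Function.iterate_succ_apply', Function.iterate_succ_apply', ih,
          jF_not_mem (fun h => hnot i (by rw [ih] at *; exact List.mem_toFinset.2 (by rw [← ih] at h ⊢; exact h)))]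
    have hr : g^[depth g r x] x = r := depth_spec (hg.2 x)
    have := hnot (depth g r x)
    rw [hgit, hr] at this
    exact this (List.mem_toFinset.2 (r_mem_q hg).1)
  · intro x hx
    exact mem_per_of_invariant (q_maps hg) (q_injOn hg) hx

lemma pList_toFinset : (pList f).toFinset = per f := by
  ext x
  rw [List.mem_toFinset, mem_pList]

lemma depth_jG : depth (jG f) (jR f) (jB f) = (pList f).length - 1 := by
  have hk : 0 < (pList f).length := pList_length_pos
  have hiter : (jG f)^[(pList f).length - 1] (jB f) = jR f := by
    rw [jB_eq, jG_iterate (by omega), jR_eq]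
    simp
  set d := depth (jG f) (jR f) (jB f) with hd
  have h1 : d ≤ (pList f).length - 1 := depth_le hiter
  rcases Nat.lt_or_ge d ((pList f).length - 1) with h | h
  · exfalso
    have hspec : (jG f)^[d] (jB f) = jR f := depth_spec ⟨_, hiter⟩
    rw [jB_eq, jG_iterate (by omega)] at hspec
    have := (List.Nodup.getElem_inj_iff pList_nodup).1 (hspec.trans jR_eq)
    omega
  · omega

lemma q_jG : qList (jG f) (jR f) (jB f) = pList f := by
  have hk : 0 < (pList f).length := pList_length_pos
  apply List.ext_getElem
  · rw [q_length, depth_jG]; omega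
  · intro i h1 h2
    rw [q_elem h1, jB_eq, jG_iterate (by omega)]
    simp

lemma jF_jG : jF (jG f) (jR f) (jB f) = f := by
  have hsort : sList (jG f) (jR f) (jB f) = (per f).sort (· ≤ ·) := by
    rw [sList, q_jG, pList_toFinset]
  funext x
  by_cases hx : x ∈ per f
  · have hx' : x ∈ (per f).sort (· ≤ ·) := (Finset.mem_sort _).2 hx
    rw [jF, hsort, if_pos hx', q_jG]
    set i := ((per f).sort (· ≤ ·)).idxOf x with hidef
    have hi : i < ((per f).sort (· ≤ ·)).length := List.idxOf_lt_length_iff.2 hx'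
    have hip : i < (pList f).length := by
      rw [pList_length]; rwa [Finset.length_sort] at hi
    rw [List.getD_eq_getElem _ _ hip, pList_elem hip, List.getElem_idxOf hi]
  · rw [jF_not_mem (by rw [q_jG]; exact fun h => hx (mem_pList.1 h)), jG_not_per hx]

variable (hg : IsTreeFun g r)
include hg

lemma pList_jF : pList (jF g r b) = qList g r b := by
  have h0 : pList (jF g r b) = (sList g r b).map (jF g r b) := by
    rw [pList, per_jF hg, sList]
  rw [h0]
  apply List.ext_getElem
  · rw [List.length_map, s_length hg]
  · intro i h1 h2
    rw [List.getElem_map, jF_elem hg (by rwa [List.length_map] at h1)]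

lemma jG_jF : jG (jF g r b) = g := by
  funext x
  by_cases hx : x ∈ qList g r b
  · have hx' : x ∈ pList (jF g r b) := by rwa [pList_jF hg]
    rw [jG, if_pos hx', pList_jF hg]
    set i := (qList g r b).idxOf x with hidef
    have hi : i < (qList g r b).length := List.idxOf_lt_length_iff.2 hx
    have hxe : x = (qList g r b)[i]'hi := (List.getElem_idxOf hi).symm
    rcases Nat.lt_or_ge (i + 1) (qList g r b).length with h | h
    · rw [List.getD_eq_getElem _ _ h, q_elem h, hxe, q_elem hi,
        ← Function.iterate_succ_apply' g]
    · have hieq : i = (qList g r b).length - 1 := by omega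
      rw [List.getD_eq_default _ _ h]
      have hxr : x = r := by
        rw [hxe]
        have h2 := (r_mem_q (b := b) hg).2
        convert h2 using 2 <;> omega
      rw [hxr, hg.1]
  · have hxp : x ∉ per (jF g r b) := by
      rw [per_jF hg]
      exact fun h => hx (List.mem_toFinset.1 h)
    rw [jG_not_per hxp, jF_not_mem hx]

lemma jR_jF : jR (jF g r b) = r := by
  have hq : 0 < (qList g r b).length := by rw [q_length]; omega
  rw [jR, pList_jF hg, List.getD_eq_getElem _ _ (by omega)]
  exact (r_mem_q hg).2

lemma jB_jF : jB (jF g r b) = b := by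
  have hq : 0 < (qList g r b).length := by rw [q_length]; omega
  rw [jB, pList_jF hg, List.getD_eq_getElem _ _ hq, q_elem hq]
  simp

end Joyal

/-- Joyal's bijection: marked tree functions are equinumerous with all functions. -/
noncomputable def joyalEquiv (α : Type*) [Fintype α] [LinearOrder α] [Nonempty α] :
    ({q : (α → α) × α // IsTreeFun q.1 q.2} × α) ≃ (α → α) where
  toFun p := jF p.1.1.1 p.1.1.2 p.2
  invFun f := (⟨(jG f, jR f), isTreeFun_jG f⟩, jB f)
  left_inv := by
    rintro ⟨⟨⟨g, r⟩, hg⟩, b⟩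
    simp only [Prod.mk.injEq, Subtype.mk.injEq]
    exact ⟨⟨jG_jF hg, jR_jF hg⟩, jB_jF hg⟩
  right_inv := fun f => jF_jG

theorem treeFun_card_mul (α : Type*) [Fintype α] [LinearOrder α] [Nonempty α] :
    Nat.card {q : (α → α) × α // IsTreeFun q.1 q.2} * Fintype.card α =
      Fintype.card α ^ Fintype.card α := by
  classical
  have h := Nat.card_congr (joyalEquiv α)
  rw [Nat.card_prod, Nat.card_eq_fintype_card (α := α),
    Nat.card_eq_fintype_card (α := α → α), Fintype.card_fun] at h
  exact h

section Trees

open SimpleGraph Walk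

variable {V : Type*} [Fintype V]

/-- The unique path from `v` to `r` in a tree. -/
noncomputable def thePath {T : SimpleGraph V} (hT : T.IsTree) (v r : V) : T.Walk v r :=
  (hT.existsUnique_path v r).exists.choose

lemma thePath_isPath {T : SimpleGraph V} (hT : T.IsTree) (v r : V) :
    (thePath hT v r).IsPath :=
  (hT.existsUnique_path v r).exists.choose_spec

lemma thePath_unique {T : SimpleGraph V} (hT : T.IsTree) {v r : V} {q : T.Walk v r}
    (hq : q.IsPath) : q = thePath hT v r :=
  ((hT.existsUnique_path v r).unique hq (thePath_isPath hT v r))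

/-- The parent function of a rooted tree. -/
noncomputable def parent {T : SimpleGraph V} (hT : T.IsTree) (r v : V) : V :=
  (thePath hT v r).getVert 1

lemma parent_root {T : SimpleGraph V} (hT : T.IsTree) (r : V) : parent hT r r = r := by
  have : (Walk.nil : T.Walk r r) = thePath hT r r := thePath_unique hT IsPath.nil
  rw [parent, ← this]
  exact Walk.getVert_of_length_le _ (by simp)

lemma thePath_not_nil {T : SimpleGraph V} (hT : T.IsTree) {r v : V} (hv : v ≠ r) :
    ¬(thePath hT v r).Nil := Walk.not_nil_of_ne hv

lemma adj_parent {T : SimpleGraph V} (hT : T.IsTree) {r v : V} (hv : v ≠ r) :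
    T.Adj v (parent hT r v) :=
  Walk.adj_snd (thePath_not_nil hT hv)

lemma thePath_parent {T : SimpleGraph V} (hT : T.IsTree) {r v : V} (hv : v ≠ r) :
    thePath hT (parent hT r v) r = (thePath hT v r).tail := by
  exact (thePath_unique hT ((thePath_isPath hT v r).tail)).symm

lemma length_thePath_parent {T : SimpleGraph V} (hT : T.IsTree) {r v : V} (hv : v ≠ r) :
    (thePath hT (parent hT r v) r).length + 1 = (thePath hT v r).length := by
  rw [thePath_parent hT hv]
  exact Walk.length_tail_add_one (thePath_not_nil hT hv)

lemma isTreeFun_parent {T : SimpleGraph V} (hT : T.IsTree) (r : V) :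
    IsTreeFun (parent hT r) r := by
  refine ⟨parent_root hT r, ?_⟩
  have key : ∀ (N : ℕ) (v : V), (thePath hT v r).length ≤ N →
      ∃ k, (parent hT r)^[k] v = r := by
    intro N
    induction N with
    | zero =>
      intro v hv
      have : v = r := by
        have h0 : (thePath hT v r).length = 0 := Nat.le_zero.1 hv
        have := (thePath hT v r).eq_of_length_eq_zero h0
        exact this
      exact ⟨0, this⟩
    | succ N ih =>
      intro v hv
      by_cases hvr : v = r
      · exact ⟨0, hvr⟩
      · have hlen := length_thePath_parent hT hvr
        obtain ⟨k, hk⟩ := ih (parent hT r v) (by omega)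
        exact ⟨k + 1, by rw [Function.iterate_succ_apply]; exact hk⟩
  intro v
  exact key _ v le_rfl

lemma adj_iff_parent {T : SimpleGraph V} (hT : T.IsTree) (r : V) {v w : V} :
    T.Adj v w ↔ v ≠ w ∧ (parent hT r v = w ∨ parent hT r w = v) := by
  constructor
  · intro hvw
    refine ⟨hvw.ne, ?_⟩
    by_cases hv : v ∈ (thePath hT w r).support
    · -- then parent w = v or lengths force; in fact we show parent w = v fails symmetric case
      -- use the length argument: show w ∉ (thePath hT v r).support leads to parent w = v
      right
      by_cases hw : w ∈ (thePath hT v r).support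
      · exfalso
        have h1 : (thePath hT v r).length < (thePath hT w r).length := by
          have hdrop : ((thePath hT w r).dropUntil v hv) = thePath hT v r :=
            thePath_unique hT ((thePath_isPath hT w r).dropUntil hv)
          have hspec := congrArg Walk.length ((thePath hT w r).take_spec hv)
          rw [Walk.length_append, hdrop] at hspec
          have htake : 0 < ((thePath hT w r).takeUntil v hv).length := by
            rcases Nat.eq_zero_or_pos ((thePath hT w r).takeUntil v hv).length with h | h
            · exact absurd (Walk.eq_of_length_eq_zero h) hvw.ne.symm
            · exact h
          omega
        have h2 : (thePath hT w r).length < (thePath hT v r).length := by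
          have hdrop : ((thePath hT v r).dropUntil w hw) = thePath hT w r :=
            thePath_unique hT ((thePath_isPath hT v r).dropUntil hw)
          have hspec := congrArg Walk.length ((thePath hT v r).take_spec hw)
          rw [Walk.length_append, hdrop] at hspec
          have htake : 0 < ((thePath hT v r).takeUntil w hw).length := by
            rcases Nat.eq_zero_or_pos ((thePath hT v r).takeUntil w hw).length with h | h
            · exact absurd (Walk.eq_of_length_eq_zero h) hvw.ne
            · exact h
          omega
        omega
      · have hpath : (Walk.cons hvw.symm (thePath hT v r)).IsPath :=
          (Walk.cons_isPath_iff _ _).2 ⟨thePath_isPath hT v r, hw⟩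
        have := thePath_unique hT hpath
        rw [parent, ← this]
        simp [Walk.getVert_cons_succ]
    · left
      have hpath : (Walk.cons hvw (thePath hT w r)).IsPath :=
        (Walk.cons_isPath_iff _ _).2 ⟨thePath_isPath hT w r, hv⟩
      have := thePath_unique hT hpath
      rw [parent, ← this]
      simp [Walk.getVert_cons_succ]
  · rintro ⟨hne, h | h⟩
    · have hvr : v ≠ r := by
        intro hv
        subst hv
        rw [parent_root] at h
        exact hne h
      have := adj_parent hT hvr
      rwa [h] at this
    · have hwr : w ≠ r := by
        intro hw
        subst hw
        rw [parent_root] at h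
        exact hne h.symm
      have := adj_parent hT hwr
      rw [h] at this
      exact this.symm

end Trees

section FunGraph

open SimpleGraph Walk

variable {V : Type*} [Fintype V]

/-- The graph of a parent function. -/
def funGraph (p : V → V) : SimpleGraph V where
  Adj v w := v ≠ w ∧ (p v = w ∨ p w = v)
  symm := by
    constructor
    rintro v w ⟨h1, h2⟩
    exact ⟨h1.symm, h2.symm⟩
  loopless := by constructor; rintro v ⟨h1, _⟩; exact h1 rfl

variable {p : V → V} {r : V}

lemma funGraph_adj {v w : V} : (funGraph p).Adj v w ↔ v ≠ w ∧ (p v = w ∨ p w = v) :=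
  Iff.rfl

lemma apply_ne_self (hp : IsTreeFun p r) {v : V} (hv : v ≠ r) : p v ≠ v := by
  intro h
  obtain ⟨k, hk⟩ := hp.2 v
  have : ∀ i, p^[i] v = v := by
    intro i
    induction i with
    | zero => rfl
    | succ i ih => rw [Function.iterate_succ_apply', ih, h]
  rw [this k] at hk
  exact hv hk

lemma funGraph_adj_apply (hp : IsTreeFun p r) {v : V} (hv : v ≠ r) :
    (funGraph p).Adj v (p v) :=
  ⟨(apply_ne_self hp hv).symm, Or.inl rfl⟩

lemma funGraph_connected (hp : IsTreeFun p r) : (funGraph p).Connected := by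
  have hreach : ∀ v, (funGraph p).Reachable v r := by
    have key : ∀ (k : ℕ) (v : V), p^[k] v = r → (funGraph p).Reachable v r := by
      intro k
      induction k with
      | zero => intro v hv; exact hv ▸ Reachable.refl v
      | succ k ih =>
        intro v hv
        by_cases hvr : v = r
        · exact hvr ▸ Reachable.refl v
        · rw [Function.iterate_succ_apply] at hv
          exact ((funGraph_adj_apply hp hvr).reachable).trans (ih _ hv)
    intro v
    obtain ⟨k, hk⟩ := hp.2 v
    exact key k v hk
  have : Nonempty V := ⟨r⟩
  exact ⟨fun v w => (hreach v).trans (hreach w).symm⟩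

/-- Adjacent deeper vertex maps to the other endpoint. -/
lemma parent_of_adj (hp : IsTreeFun p r) {v w : V} (hvw : (funGraph p).Adj v w)
    (hd : depth p r w ≤ depth p r v) : p v = w := by
  obtain ⟨hne, h | h⟩ := hvw
  · exact h
  · exfalso
    have hwr : w ≠ r := by
      intro hw
      subst hw
      rw [hp.1] at h
      exact hne h.symm
    have := depth_succ (hp.2 w) hwr
    rw [h] at this
    omega

lemma funGraph_acyclic (hp : IsTreeFun p r) : (funGraph p).IsAcyclic := by
  intro v c hc
  -- pick a vertex of maximal depth on the cycle
  obtain ⟨u, hu, hmax⟩ := c.support.toFinset.exists_max_image (depth p r)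
    ⟨v, List.mem_toFinset.2 c.start_mem_support⟩
  rw [List.mem_toFinset] at hu
  have hmax' : ∀ x ∈ c.support, depth p r x ≤ depth p r u := by
    intro x hx
    exact hmax x (List.mem_toFinset.2 hx)
  -- rotate the cycle to start at u
  set c' := c.rotate u hu with hc'
  have hcyc : c'.IsCycle := hc.rotate hu
  have hsup : ∀ x ∈ c'.support, depth p r x ≤ depth p r u := by
    intro x hx
    rw [Walk.support_eq_cons] at hx
    rcases List.mem_cons.1 hx with rfl | hx
    · exact le_rfl
    · exact hmax' x (List.mem_of_mem_tail
        ((Walk.support_rotate c u hu).mem_iff.1 hx))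
  clear_value c'
  -- destructure the cycle
  cases c' with
  | nil => exact hcyc.ne_nil rfl
  | @cons _ x _ hux q =>
    obtain ⟨hq, hedge⟩ := (Walk.cons_isCycle_iff _ _).1 hcyc
    have hxu : x ≠ u := hux.ne'
    have hqnil : ¬q.Nil := Walk.not_nil_of_ne hxu
    have hqrnil : ¬q.reverse.Nil := Walk.not_nil_of_ne (Ne.symm hxu)
    set y := q.reverse.getVert 1 with hy
    have huy : (funGraph p).Adj u y := q.reverse.adj_snd hqrnil
    -- both x and y are on the support
    have hxs : x ∈ (Walk.cons hux q).support := by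
      rw [Walk.support_cons]
      exact List.mem_cons_of_mem _ q.start_mem_support
    have hys : y ∈ (Walk.cons hux q).support := by
      rw [Walk.support_cons]
      apply List.mem_cons_of_mem
      have : y ∈ q.reverse.support := Walk.mem_support_iff_exists_getVert.2
        ⟨1, rfl, by rw [Walk.length_reverse]; rw [Walk.not_nil_iff_lt_length] at hqnil; omega⟩
      rwa [Walk.support_reverse, List.mem_reverse] at this
    -- hence both are parents of u, so equal
    have hpx : p u = x := parent_of_adj hp hux (hsup x hxs)
    have hpy : p u = y := parent_of_adj hp huy (hsup y hys)
    -- but the edge s(u, y) is in q, contradicting s(u, x) ∉ q.edges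
    have hymem : s(u, y) ∈ q.edges := by
      have h1 : s(u, y) ∈ q.reverse.edges := by
        rw [← Walk.cons_tail_eq q.reverse hqrnil, Walk.edges_cons]
        exact List.mem_cons.2 (Or.inl (by rw [hy]))
      rwa [Walk.edges_reverse, List.mem_reverse] at h1
    have hxy : x = y := by rw [← hpx, hpy]
    have : s(u, x) = s(u, y) := by rw [hxy]
    exact hedge (by rw [this]; exact hymem)

end FunGraph

section Final

open SimpleGraph Walk

variable {V : Type*} [Fintype V]

lemma funGraph_isTree {p : V → V} {r : V} (hp : IsTreeFun p r) : (funGraph p).IsTree :=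
  ⟨funGraph_connected hp, funGraph_acyclic hp⟩

lemma exists_good_path {p : V → V} {r : V} (hp : IsTreeFun p r) :
    ∀ (N : ℕ) (v : V), depth p r v ≤ N →
      ∃ w : (funGraph p).Walk v r, w.IsPath ∧
        (∀ x ∈ w.support, depth p r x ≤ depth p r v) ∧ (v ≠ r → w.getVert 1 = p v) := by
  intro N
  induction N with
  | zero =>
    intro v hv
    have hvr : v = r := by
      have := depth_spec (hp.2 v)
      rwa [Nat.le_zero.1 hv, Function.iterate_zero, id] at this
    subst hvr
    exact ⟨Walk.nil, IsPath.nil, by simp, fun h => absurd rfl h⟩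
  | succ N ih =>
    intro v hv
    by_cases hvr : v = r
    · subst hvr
      exact ⟨Walk.nil, IsPath.nil, by simp, fun h => absurd rfl h⟩
    · have hd := depth_succ (hp.2 v) hvr
      obtain ⟨w', hw', hsup', _⟩ := ih (p v) (by omega)
      have hvs : v ∉ w'.support := by
        intro hmem
        have := hsup' v hmem
        omega
      refine ⟨Walk.cons (funGraph_adj_apply hp hvr) w',
        (Walk.cons_isPath_iff _ _).2 ⟨hw', hvs⟩, ?_, fun _ => ?_⟩
      · intro x hx
        rw [Walk.support_cons] at hx
        rcases List.mem_cons.1 hx with rfl | hx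
        · exact le_rfl
        · have := hsup' x hx
          omega
      · rw [Walk.getVert_cons_succ, Walk.getVert_zero]

lemma parent_funGraph {p : V → V} {r : V} (hp : IsTreeFun p r) (v : V) :
    parent (funGraph_isTree hp) r v = p v := by
  by_cases hvr : v = r
  · subst hvr
    rw [parent_root, hp.1]
  · obtain ⟨w, hw, _, hg⟩ := exists_good_path hp (depth p r v) v le_rfl
    rw [parent, ← thePath_unique (funGraph_isTree hp) hw]
    exact hg hvr

theorem card_rooted_trees_eq (V : Type*) [Fintype V] :
    Nat.card {q : SimpleGraph V × V // q.1.IsTree} =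
      Nat.card {q : (V → V) × V // IsTreeFun q.1 q.2} := by
  apply Nat.card_congr
  refine Equiv.ofBijective
    (fun t => ⟨(parent t.2 t.1.2, t.1.2), isTreeFun_parent t.2 t.1.2⟩) ⟨?_, ?_⟩
  · rintro ⟨⟨T, r⟩, hT⟩ ⟨⟨T', r'⟩, hT'⟩ h
    simp only [Subtype.mk.injEq, Prod.mk.injEq] at h
    obtain ⟨hpar, rfl⟩ := h
    have hTT' : T = T' := by
      ext v w
      rw [adj_iff_parent hT r, adj_iff_parent hT' r, hpar]
    subst hTT'
    rfl
  · rintro ⟨⟨p, r⟩, hp⟩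
    refine ⟨⟨(funGraph p, r), funGraph_isTree hp⟩, ?_⟩
    simp only [Subtype.mk.injEq, Prod.mk.injEq]
    exact ⟨funext (parent_funGraph hp), trivial⟩

end Final

theorem rooted_cayley_formula (n : ℕ) (hn : 1 ≤ n) :
    Nat.card {p : SimpleGraph (Fin n) × Fin n // p.1.IsTree} = n ^ (n - 1) := by
  have hne : Nonempty (Fin n) := Fin.pos_iff_nonempty.1 hn
  have h1 := card_rooted_trees_eq (Fin n)
  have h2 := treeFun_card_mul (Fin n)
  rw [Fintype.card_fin] at h2
  rw [h1]
  have h3 : n ^ n = n ^ (n - 1) * n := by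
    rw [← pow_succ]
    congr 1
    omega
  apply Nat.eq_of_mul_eq_mul_right (show 0 < n by omega)
  rw [h2]
  exact h3
end

section
/- For a function f : Fin n → Fin n, the number of functions f having exactly one cyclic vertex equals n^(n-1). -/
open Function Finset

section
variable {n : ℕ}

def IsCyc (f : Fin n → Fin n) (v : Fin n) : Prop := ∃ k, 1 ≤ k ∧ f^[k] v = v

lemma iterate_mul_fix (f : Fin n → Fin n) {v : Fin n} {k : ℕ} (h : f^[k] v = v) :
    ∀ t, f^[t * k] v = v := by
  intro t
  induction t with
  | zero => simp
  | succ t ih => rw [Nat.succ_mul, Function.iterate_add_apply, h, ih]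

lemma isCyc_ge {f : Fin n → Fin n} {v : Fin n} (h : IsCyc f v) (i : ℕ) :
    ∃ K, i ≤ K ∧ 1 ≤ K ∧ f^[K] v = v := by
  obtain ⟨k, hk1, hk⟩ := h
  refine ⟨(i + 1) * k, ?_, ?_, iterate_mul_fix f hk (i + 1)⟩
  · nlinarith
  · nlinarith

lemma isCyc_apply {f : Fin n → Fin n} {v : Fin n} (h : IsCyc f v) : IsCyc f (f v) := by
  obtain ⟨k, hk1, hk⟩ := h
  exact ⟨k, hk1, by rw [← Function.iterate_succ_apply, Function.iterate_succ_apply', hk]⟩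

lemma exists_iterate_isCyc [NeZero n] (f : Fin n → Fin n) (x : Fin n) :
    ∃ i, IsCyc f (f^[i] x) := by
  have hlt : Fintype.card (Fin n) < Fintype.card (Fin (n + 1)) := by simp
  obtain ⟨i, j, hne, hij⟩ :=
    Fintype.exists_ne_map_eq_of_card_lt (fun i : Fin (n + 1) => f^[(i : ℕ)] x) hlt
  have key : ∀ a b : ℕ, a < b → f^[a] x = f^[b] x → ∃ i, IsCyc f (f^[i] x) := by
    intro a b hab h
    refine ⟨a, b - a, by omega, ?_⟩
    rw [← Function.iterate_add_apply]
    have : b - a + a = b := by omega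
    rw [this, ← h]
  rcases lt_trichotomy (i : ℕ) (j : ℕ) with h | h | h
  · exact key _ _ h hij
  · exact absurd (Fin.ext h) hne
  · exact key _ _ h hij.symm

lemma isCyc_injOn {f : Fin n → Fin n} {x y : Fin n} (hx : IsCyc f x) (hy : IsCyc f y)
    (h : f x = f y) : x = y := by
  obtain ⟨kx, hkx1, hkx⟩ := hx
  obtain ⟨ky, hky1, hky⟩ := hy
  have h1 : f^[kx * ky] x = x := by rw [mul_comm]; exact iterate_mul_fix f hkx ky
  have h2 : f^[kx * ky] y = y := iterate_mul_fix f hky kx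
  have hK : 1 ≤ kx * ky := by nlinarith
  obtain ⟨m, hm⟩ : ∃ m, kx * ky = m + 1 := ⟨kx * ky - 1, by omega⟩
  rw [hm] at h1 h2
  calc x = f^[m + 1] x := h1.symm
    _ = f^[m] (f x) := Function.iterate_succ_apply f m x
    _ = f^[m] (f y) := by rw [h]
    _ = f^[m + 1] y := (Function.iterate_succ_apply f m y).symm
    _ = y := h2

lemma iterate_mem_closed {T : Finset (Fin n)} {g : Fin n → Fin n}
    (hcl : ∀ y ∈ T, g y ∈ T) {x : Fin n} (hx : x ∈ T) (i : ℕ) : g^[i] x ∈ T := by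
  induction i with
  | zero => simpa
  | succ i ih => rw [Function.iterate_succ_apply']; exact hcl _ ih

lemma isCyc_transfer {T : Finset (Fin n)} {g₁ g₂ : Fin n → Fin n}
    (hcl : ∀ y ∈ T, g₁ y ∈ T) (hag : ∀ y, y ∉ T → g₁ y = g₂ y)
    {x : Fin n} (hx : x ∉ T) (hc : IsCyc g₁ x) : IsCyc g₂ x := by
  have claim1 : ∀ i, g₁^[i] x ∉ T := by
    intro i hi
    obtain ⟨K, hKi, hK1, hK⟩ := isCyc_ge hc i
    have : g₁^[K] x ∈ T := by
      have : g₁^[(K - i) + i] x ∈ T := by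
        rw [Function.iterate_add_apply]
        exact iterate_mem_closed hcl hi _
      have e : K - i + i = K := by omega
      rwa [e] at this
    rw [hK] at this
    exact hx this
  have claim2 : ∀ i, g₁^[i] x = g₂^[i] x := by
    intro i
    induction i with
    | zero => rfl
    | succ i ih =>
      rw [Function.iterate_succ_apply', Function.iterate_succ_apply', ← ih,
        hag _ (claim1 i)]
  obtain ⟨k, hk1, hk⟩ := hc
  exact ⟨k, hk1, by rw [← claim2, hk]⟩

lemma cancel_injOn {T : Finset (Fin n)} {g : Fin n → Fin n}
    (hcl : ∀ y ∈ T, g y ∈ T) (hinj : Set.InjOn g ↑T) :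
    ∀ i (a b : Fin n), a ∈ T → b ∈ T → g^[i] a = g^[i] b → a = b := by
  intro i
  induction i with
  | zero => intro a b _ _ h; simpa using h
  | succ i ih =>
    intro a b ha hb h
    rw [Function.iterate_succ_apply, Function.iterate_succ_apply] at h
    exact hinj ha hb (ih _ _ (hcl _ ha) (hcl _ hb) h)

lemma isCyc_of_closed_injOn [NeZero n] {T : Finset (Fin n)} {g : Fin n → Fin n}
    (hcl : ∀ y ∈ T, g y ∈ T) (hinj : Set.InjOn g ↑T) {x : Fin n} (hx : x ∈ T) :
    IsCyc g x := by
  have hlt : Fintype.card (Fin n) < Fintype.card (Fin (n + 1)) := by simp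
  obtain ⟨i, j, hne, hij⟩ :=
    Fintype.exists_ne_map_eq_of_card_lt (fun i : Fin (n + 1) => g^[(i : ℕ)] x) hlt
  have key : ∀ a b : ℕ, a < b → g^[a] x = g^[b] x → IsCyc g x := by
    intro a b hab h
    have h2 : g^[a] x = g^[a] (g^[b - a] x) := by
      rw [← Function.iterate_add_apply]
      have : a + (b - a) = b := by omega
      rw [this, h]
    have := cancel_injOn hcl hinj a x (g^[b - a] x) hx (iterate_mem_closed hcl hx _) h2
    exact ⟨b - a, by omega, this.symm⟩
  rcases lt_trichotomy (i : ℕ) (j : ℕ) with h | h | h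
  · exact key _ _ h hij
  · exact absurd (Fin.ext h) hne
  · exact key _ _ h hij.symm

open Classical in
noncomputable def cycSet (f : Fin n → Fin n) : Finset (Fin n) :=
  Finset.univ.filter (IsCyc f)

lemma mem_cycSet {f : Fin n → Fin n} {x : Fin n} : x ∈ cycSet f ↔ IsCyc f x := by
  simp [cycSet]

lemma cycSet_mapsTo {f : Fin n → Fin n} {x : Fin n} (hx : x ∈ cycSet f) :
    f x ∈ cycSet f :=
  mem_cycSet.mpr (isCyc_apply (mem_cycSet.mp hx))

lemma cycSet_injOn (f : Fin n → Fin n) : Set.InjOn f ↑(cycSet f) := fun x hx y hy h =>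
  isCyc_injOn (mem_cycSet.mp hx) (mem_cycSet.mp hy) h

lemma card_cycSet_pos [NeZero n] (f : Fin n → Fin n) : 0 < (cycSet f).card := by
  obtain ⟨i, hi⟩ := exists_iterate_isCyc f 0
  exact Finset.card_pos.mpr ⟨f^[i] 0, mem_cycSet.mpr hi⟩

noncomputable def cycPerm (h : Fin n → Fin n) : cycSet h ≃ cycSet h :=
  Equiv.ofBijective (fun y => ⟨h y, cycSet_mapsTo y.2⟩)
    (Finite.injective_iff_bijective.mp (fun a b hab =>
      Subtype.ext (cycSet_injOn h a.2 b.2 (congrArg Subtype.val hab))))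

noncomputable def decL (h : Fin n → Fin n) : Fin (cycSet h).card ≃ cycSet h :=
  ((cycSet h).orderIsoOfFin rfl).toEquiv.trans (cycPerm h)

lemma decL_apply (h : Fin n → Fin n) (j : Fin (cycSet h).card) :
    (decL h j : Fin n) = h ↑((cycSet h).orderIsoOfFin rfl j) := rfl

noncomputable def decodeF (h : Fin n → Fin n) : Fin n → Fin n := fun x =>
  if hx : x ∈ cycSet h then
    ↑(decL h ⟨((decL h).symm ⟨x, hx⟩ : ℕ) - 1,
        lt_of_le_of_lt (Nat.sub_le _ _) (Fin.is_lt _)⟩)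
  else h x

noncomputable def decodeW [NeZero n] (h : Fin n → Fin n) : Fin n :=
  ↑(decL h ⟨(cycSet h).card - 1, Nat.sub_lt (card_cycSet_pos h) one_pos⟩)

lemma decodeF_apply_mem (h : Fin n → Fin n) {x : Fin n} (hx : x ∈ cycSet h) :
    decodeF h x = ↑(decL h ⟨((decL h).symm ⟨x, hx⟩ : ℕ) - 1,
        lt_of_le_of_lt (Nat.sub_le _ _) (Fin.is_lt _)⟩) :=
  dif_pos hx

lemma decodeF_apply_not_mem (h : Fin n → Fin n) {x : Fin n} (hx : x ∉ cycSet h) :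
    decodeF h x = h x := dif_neg hx

lemma decodeF_apply_decL (h : Fin n → Fin n) (j : Fin (cycSet h).card) :
    decodeF h ↑(decL h j) = ↑(decL h ⟨(j : ℕ) - 1,
        lt_of_le_of_lt (Nat.sub_le _ _) (Fin.is_lt _)⟩) := by
  rw [decodeF_apply_mem h (decL h j).2]
  congr 2
  have : (⟨↑(decL h j), (decL h j).2⟩ : cycSet h) = decL h j := rfl
  rw [this, Equiv.symm_apply_apply]

lemma decodeF_mem_closed (h : Fin n → Fin n) {x : Fin n} (hx : x ∈ cycSet h) :
    decodeF h x ∈ cycSet h := by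
  rw [decodeF_apply_mem h hx]; exact (decL h _).2

lemma decodeF_iterate (h : Fin n → Fin n) (j : ℕ) (hj : j < (cycSet h).card) (k : ℕ) :
    (decodeF h)^[k] ↑(decL h ⟨j, hj⟩) = ↑(decL h ⟨j - k, by omega⟩) := by
  induction k with
  | zero => simp
  | succ k ih =>
    rw [Function.iterate_succ_apply', ih, decodeF_apply_decL]
    refine congrArg (fun t => (↑(decL h t) : Fin n)) (Fin.ext ?_)
    simp
    omega

noncomputable def decRoot [NeZero n] (h : Fin n → Fin n) : Fin n :=
  ↑(decL h ⟨0, card_cycSet_pos h⟩)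

lemma decodeF_isCyc_iff [NeZero n] (h : Fin n → Fin n) (x : Fin n) :
    IsCyc (decodeF h) x ↔ x = decRoot h := by
  constructor
  · intro hc
    by_cases hx : x ∈ cycSet h
    · set j : Fin (cycSet h).card := (decL h).symm ⟨x, hx⟩ with hjdef
      have hxe : x = ↑(decL h ⟨(j : ℕ), j.is_lt⟩) := by
        rw [show (⟨(j : ℕ), j.is_lt⟩ : Fin (cycSet h).card) = j from rfl,
          hjdef, Equiv.apply_symm_apply]
      obtain ⟨k, hk1, hk⟩ := hc
      rw [hxe, decodeF_iterate] at hk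
      have hx2 : (decL h ⟨(j : ℕ) - k, by omega⟩) = decL h ⟨(j : ℕ), j.is_lt⟩ :=
        Subtype.coe_injective hk
      have hv : (j : ℕ) - k = (j : ℕ) := congrArg Fin.val ((decL h).injective hx2)
      have hj0 : (j : ℕ) = 0 := by omega
      rw [hxe]
      simp only [decRoot]
      exact congrArg (fun t => (↑(decL h t) : Fin n)) (Fin.ext hj0)
    · exfalso
      apply hx
      exact mem_cycSet.mpr (isCyc_transfer (fun y hy => decodeF_mem_closed h hy)
        (fun y hy => decodeF_apply_not_mem h hy) hx hc)
  · rintro rfl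
    refine ⟨1, le_refl _, ?_⟩
    simp only [Function.iterate_one, decRoot]
    rw [decodeF_apply_decL]
    exact congrArg (fun t => (↑(decL h t) : Fin n)) (Fin.ext (by simp))

lemma decode_unique [NeZero n] (h : Fin n → Fin n) :
    ∃! v, IsCyc (decodeF h) v :=
  ⟨decRoot h, (decodeF_isCyc_iff h _).mpr rfl, fun y hy => (decodeF_isCyc_iff h y).mp hy⟩

noncomputable def rootOf (f : Fin n → Fin n) (hu : ∃! v, IsCyc f v) : Fin n :=
  hu.exists.choose

lemma rootOf_cyc (f : Fin n → Fin n) (hu : ∃! v, IsCyc f v) : IsCyc f (rootOf f hu) :=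
  hu.exists.choose_spec

lemma rootOf_eq {f : Fin n → Fin n} (hu : ∃! v, IsCyc f v) {y : Fin n}
    (hy : IsCyc f y) : y = rootOf f hu :=
  hu.unique hy (rootOf_cyc f hu)

lemma rootOf_fixed (f : Fin n → Fin n) (hu : ∃! v, IsCyc f v) :
    f (rootOf f hu) = rootOf f hu :=
  rootOf_eq hu (isCyc_apply (rootOf_cyc f hu))

lemma exists_hit [NeZero n] (f : Fin n → Fin n) (w : Fin n) (hu : ∃! v, IsCyc f v) :
    ∃ k, f^[k] w = rootOf f hu := by
  obtain ⟨i, hi⟩ := exists_iterate_isCyc f w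
  exact ⟨i, hu.unique hi (rootOf_cyc f hu)⟩

noncomputable def pm [NeZero n] (f : Fin n → Fin n) (w : Fin n)
    (hu : ∃! v, IsCyc f v) : ℕ :=
  Nat.find (exists_hit f w hu)

lemma pm_spec [NeZero n] (f : Fin n → Fin n) (w : Fin n) (hu : ∃! v, IsCyc f v) :
    f^[pm f w hu] w = rootOf f hu :=
  Nat.find_spec (exists_hit f w hu)

lemma pm_min [NeZero n] (f : Fin n → Fin n) (w : Fin n) (hu : ∃! v, IsCyc f v)
    {k : ℕ} (hk : k < pm f w hu) : f^[k] w ≠ rootOf f hu :=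
  Nat.find_min (exists_hit f w hu) hk

lemma path_injOn [NeZero n] (f : Fin n → Fin n) (w : Fin n) (hu : ∃! v, IsCyc f v) :
    ∀ i ≤ pm f w hu, ∀ j ≤ pm f w hu, f^[i] w = f^[j] w → i = j := by
  have key : ∀ i j, i < j → j ≤ pm f w hu → f^[i] w = f^[j] w → False := by
    intro i j hij hj h
    have hc : IsCyc f (f^[i] w) := by
      refine ⟨j - i, by omega, ?_⟩
      rw [← Function.iterate_add_apply]
      have : j - i + i = j := by omega
      rw [this, ← h]
    exact pm_min f w hu (by omega) (rootOf_eq hu hc)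
  intro i hi j hj h
  rcases lt_trichotomy i j with hlt | heq | hgt
  · exact absurd h (fun h => key i j hlt hj h)
  · exact heq
  · exact absurd h.symm (fun h => key j i hgt hi h)

noncomputable def pathSet [NeZero n] (f : Fin n → Fin n) (w : Fin n)
    (hu : ∃! v, IsCyc f v) : Finset (Fin n) :=
  (Finset.range (pm f w hu + 1)).image (fun i => f^[i] w)

lemma mem_pathSet [NeZero n] {f : Fin n → Fin n} {w : Fin n} {hu : ∃! v, IsCyc f v}
    {x : Fin n} : x ∈ pathSet f w hu ↔ ∃ i ≤ pm f w hu, f^[i] w = x := by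
  simp [pathSet, Finset.mem_image, Finset.mem_range, Nat.lt_succ_iff]

lemma card_pathSet [NeZero n] (f : Fin n → Fin n) (w : Fin n) (hu : ∃! v, IsCyc f v) :
    (pathSet f w hu).card = pm f w hu + 1 := by
  rw [pathSet, Finset.card_image_of_injOn, Finset.card_range]
  intro i hi j hj h
  simp only [Finset.coe_range, Set.mem_Iio] at hi hj
  exact path_injOn f w hu i (by omega) j (by omega) h

noncomputable def encodeF [NeZero n] (f : Fin n → Fin n) (w : Fin n)
    (hu : ∃! v, IsCyc f v) : Fin n → Fin n := fun x =>
  if hx : x ∈ pathSet f w hu then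
    f^[pm f w hu - (((pathSet f w hu).orderIsoOfFin rfl).symm ⟨x, hx⟩ : ℕ)] w
  else f x

lemma encodeF_apply_mem [NeZero n] (f : Fin n → Fin n) (w : Fin n)
    (hu : ∃! v, IsCyc f v) {x : Fin n} (hx : x ∈ pathSet f w hu) :
    encodeF f w hu x
      = f^[pm f w hu - (((pathSet f w hu).orderIsoOfFin rfl).symm ⟨x, hx⟩ : ℕ)] w :=
  dif_pos hx

lemma encodeF_apply_not_mem [NeZero n] (f : Fin n → Fin n) (w : Fin n)
    (hu : ∃! v, IsCyc f v) {x : Fin n} (hx : x ∉ pathSet f w hu) :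
    encodeF f w hu x = f x :=
  dif_neg hx

lemma encodeF_apply_eP [NeZero n] (f : Fin n → Fin n) (w : Fin n)
    (hu : ∃! v, IsCyc f v) (j : Fin (pathSet f w hu).card) :
    encodeF f w hu ↑((pathSet f w hu).orderIsoOfFin rfl j)
      = f^[pm f w hu - (j : ℕ)] w := by
  rw [encodeF_apply_mem f w hu ((pathSet f w hu).orderIsoOfFin rfl j).2]
  congr 2
  have : (⟨↑((pathSet f w hu).orderIsoOfFin rfl j),
      ((pathSet f w hu).orderIsoOfFin rfl j).2⟩ : pathSet f w hu)
      = (pathSet f w hu).orderIsoOfFin rfl j := rfl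
  rw [this, OrderIso.symm_apply_apply]

lemma encodeF_mem_closed [NeZero n] (f : Fin n → Fin n) (w : Fin n)
    (hu : ∃! v, IsCyc f v) {x : Fin n} (hx : x ∈ pathSet f w hu) :
    encodeF f w hu x ∈ pathSet f w hu := by
  rw [encodeF_apply_mem f w hu hx]
  exact mem_pathSet.mpr ⟨_, Nat.sub_le _ _, rfl⟩

lemma encodeF_injOn [NeZero n] (f : Fin n → Fin n) (w : Fin n)
    (hu : ∃! v, IsCyc f v) : Set.InjOn (encodeF f w hu) ↑(pathSet f w hu) := by
  intro x hx y hy hxy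
  rw [Finset.mem_coe] at hx hy
  rw [encodeF_apply_mem f w hu hx, encodeF_apply_mem f w hu hy] at hxy
  set ix := (((pathSet f w hu).orderIsoOfFin rfl).symm ⟨x, hx⟩ : ℕ) with hixd
  set iy := (((pathSet f w hu).orderIsoOfFin rfl).symm ⟨y, hy⟩ : ℕ) with hiyd
  have hixlt : ix < pm f w hu + 1 := by
    rw [hixd, ← card_pathSet f w hu]; exact Fin.is_lt _
  have hiylt : iy < pm f w hu + 1 := by
    rw [hiyd, ← card_pathSet f w hu]; exact Fin.is_lt _
  have := path_injOn f w hu _ (Nat.sub_le _ _) _ (Nat.sub_le _ _) hxy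
  have hxy2 : ix = iy := by omega
  have : (((pathSet f w hu).orderIsoOfFin rfl).symm ⟨x, hx⟩)
      = (((pathSet f w hu).orderIsoOfFin rfl).symm ⟨y, hy⟩) := Fin.ext hxy2
  have := congrArg (fun t => (((pathSet f w hu).orderIsoOfFin rfl) t : Fin n)) this
  simpa using this

lemma encodeF_isCyc_iff [NeZero n] (f : Fin n → Fin n) (w : Fin n)
    (hu : ∃! v, IsCyc f v) (x : Fin n) :
    IsCyc (encodeF f w hu) x ↔ x ∈ pathSet f w hu := by
  constructor
  · intro hc
    by_contra hx
    have hcf : IsCyc f x :=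
      isCyc_transfer (fun y hy => encodeF_mem_closed f w hu hy)
        (fun y hy => encodeF_apply_not_mem f w hu hy) hx hc
    exact hx (mem_pathSet.mpr ⟨pm f w hu, le_refl _, by
      rw [pm_spec f w hu, ← rootOf_eq hu hcf]⟩)
  · intro hx
    exact isCyc_of_closed_injOn (fun y hy => encodeF_mem_closed f w hu hy)
      (encodeF_injOn f w hu) hx

lemma orderIsoOfFin_congr {T₁ T₂ : Finset (Fin n)} (hT : T₁ = T₂)
    {j₁ : Fin T₁.card} {j₂ : Fin T₂.card} (hj : (j₁ : ℕ) = (j₂ : ℕ)) :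
    (↑(T₁.orderIsoOfFin rfl j₁) : Fin n) = ↑(T₂.orderIsoOfFin rfl j₂) := by
  subst hT
  rw [Fin.ext hj]

lemma orderIsoOfFin_symm_congr {T₁ T₂ : Finset (Fin n)} (hT : T₁ = T₂)
    {x : Fin n} (h1 : x ∈ T₁) (h2 : x ∈ T₂) :
    ((T₁.orderIsoOfFin rfl).symm ⟨x, h1⟩ : ℕ)
      = ((T₂.orderIsoOfFin rfl).symm ⟨x, h2⟩ : ℕ) := by
  subst hT
  rfl

lemma decL_coe_inj (h : Fin n → Fin n) {a b : ℕ} {ha : a < (cycSet h).card}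
    {hb : b < (cycSet h).card}
    (e : (↑(decL h ⟨a, ha⟩) : Fin n) = ↑(decL h ⟨b, hb⟩)) : a = b :=
  congrArg Fin.val ((decL h).injective (Subtype.coe_injective e))

lemma cycSet_encodeF [NeZero n] (f : Fin n → Fin n) (w : Fin n)
    (hu : ∃! v, IsCyc f v) : cycSet (encodeF f w hu) = pathSet f w hu :=
  Finset.ext fun x => by rw [mem_cycSet]; exact encodeF_isCyc_iff f w hu x

lemma card_cycSet_encodeF [NeZero n] (f : Fin n → Fin n) (w : Fin n)
    (hu : ∃! v, IsCyc f v) :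
    (cycSet (encodeF f w hu)).card = pm f w hu + 1 := by
  rw [cycSet_encodeF, card_pathSet]

lemma decL_encodeF [NeZero n] (f : Fin n → Fin n) (w : Fin n)
    (hu : ∃! v, IsCyc f v) (j : ℕ) (hj : j < (cycSet (encodeF f w hu)).card) :
    (↑(decL (encodeF f w hu) ⟨j, hj⟩) : Fin n) = f^[pm f w hu - j] w := by
  have hj' : j < (pathSet f w hu).card := by
    rw [← cycSet_encodeF f w hu]; exact hj
  rw [decL_apply,
    orderIsoOfFin_congr (cycSet_encodeF f w hu)
      (show ((⟨j, hj⟩ : Fin _) : ℕ) = ((⟨j, hj'⟩ : Fin _) : ℕ) from rfl),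
    encodeF_apply_eP]

lemma decodeW_encodeF [NeZero n] (f : Fin n → Fin n) (w : Fin n)
    (hu : ∃! v, IsCyc f v) : decodeW (encodeF f w hu) = w := by
  have hcard := card_cycSet_encodeF f w hu
  rw [decodeW, decL_encodeF f w hu]
  rw [hcard]
  simp

lemma decodeF_encodeF [NeZero n] (f : Fin n → Fin n) (w : Fin n)
    (hu : ∃! v, IsCyc f v) : decodeF (encodeF f w hu) = f := by
  funext x
  set h := encodeF f w hu with hh
  by_cases hx : x ∈ cycSet h
  · have hjxlt : (((decL h).symm ⟨x, hx⟩ : Fin _) : ℕ) < (cycSet h).card := Fin.is_lt _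
    obtain ⟨jx, hjx⟩ : ∃ jx, (((decL h).symm ⟨x, hx⟩ : Fin _) : ℕ) = jx := ⟨_, rfl⟩
    rw [decodeF_apply_mem h hx, decL_encodeF f w hu, hjx]
    rw [hjx] at hjxlt
    have hfin : (decL h).symm ⟨x, hx⟩ = ⟨jx, hjxlt⟩ := Fin.ext hjx
    have hxe : x = ↑(decL h ⟨jx, hjxlt⟩) := by
      have h2 := congrArg (fun t => (↑(decL h t) : Fin n)) hfin
      simpa [Equiv.apply_symm_apply] using h2
    have hxit : x = f^[pm f w hu - jx] w := by
      rw [hxe, decL_encodeF f w hu]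
    have hjxlt' : jx < pm f w hu + 1 := by
      rw [← card_cycSet_encodeF f w hu]; exact hjxlt
    rcases Nat.eq_zero_or_pos jx with hjx0 | hjx1
    · subst hjx0
      simp only [Nat.zero_sub, Nat.sub_zero] at hxit ⊢
      rw [hxit, pm_spec f w hu, rootOf_fixed f hu]
    · have e1 : pm f w hu - (jx - 1) = (pm f w hu - jx) + 1 := by omega
      rw [e1, Function.iterate_succ_apply', ← hxit]
  · rw [decodeF_apply_not_mem h hx]
    rw [hh, encodeF_apply_not_mem f w hu (by rwa [← cycSet_encodeF f w hu])]

lemma decodeW_eq [NeZero n] (h : Fin n → Fin n) :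
    decodeW h = ↑(decL h ⟨(cycSet h).card - 1, Nat.sub_lt (card_cycSet_pos h) one_pos⟩) :=
  rfl

lemma rootOf_decodeF [NeZero n] (h : Fin n → Fin n) :
    rootOf (decodeF h) (decode_unique h) = decRoot h :=
  (rootOf_eq (decode_unique h) ((decodeF_isCyc_iff h _).mpr rfl)).symm

lemma pm_decodeF [NeZero n] (h : Fin n → Fin n) :
    pm (decodeF h) (decodeW h) (decode_unique h) = (cycSet h).card - 1 := by
  have hc : 0 < (cycSet h).card := card_cycSet_pos h
  apply Nat.le_antisymm
  · apply Nat.find_min'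
    rw [decodeW_eq, decodeF_iterate, rootOf_decodeF]
    exact congrArg (fun t => (↑(decL h t) : Fin n)) (Fin.ext (by simp))
  · by_contra hcon
    push_neg at hcon
    have hspec := pm_spec (decodeF h) (decodeW h) (decode_unique h)
    rw [decodeW_eq, decodeF_iterate, rootOf_decodeF] at hspec
    have h0 : (cycSet h).card - 1 - pm (decodeF h) (decodeW h) (decode_unique h) = 0 :=
      decL_coe_inj h hspec
    omega

lemma pathSet_decodeF [NeZero n] (h : Fin n → Fin n) :
    pathSet (decodeF h) (decodeW h) (decode_unique h) = cycSet h := by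
  have hc : 0 < (cycSet h).card := card_cycSet_pos h
  apply Finset.eq_of_subset_of_card_le
  · intro x hx
    obtain ⟨i, hi, hix⟩ := mem_pathSet.mp hx
    rw [decodeW_eq, decodeF_iterate] at hix
    rw [← hix]; exact (decL h _).2
  · rw [card_pathSet, pm_decodeF]
    omega

lemma encodeF_decodeF [NeZero n] (h : Fin n → Fin n) :
    encodeF (decodeF h) (decodeW h) (decode_unique h) = h := by
  have hc : 0 < (cycSet h).card := card_cycSet_pos h
  funext x
  by_cases hx : x ∈ cycSet h
  · have hxP : x ∈ pathSet (decodeF h) (decodeW h) (decode_unique h) := by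
      rw [pathSet_decodeF]; exact hx
    rw [encodeF_apply_mem _ _ _ hxP,
      orderIsoOfFin_symm_congr (pathSet_decodeF h) hxP hx, pm_decodeF,
      decodeW_eq, decodeF_iterate]
    have hiS : (((cycSet h).orderIsoOfFin rfl).symm ⟨x, hx⟩ : ℕ) < (cycSet h).card :=
      Fin.is_lt _
    have step1 : (↑(decL h ⟨(cycSet h).card - 1 - ((cycSet h).card - 1
          - (((cycSet h).orderIsoOfFin rfl).symm ⟨x, hx⟩ : ℕ)),
        by omega⟩) : Fin n)
        = ↑(decL h ⟨(((cycSet h).orderIsoOfFin rfl).symm ⟨x, hx⟩ : ℕ), hiS⟩) := by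
      refine congrArg (fun t => (↑(decL h t) : Fin n)) (Fin.ext ?_)
      simp only [Fin.val_mk]
      omega
    rw [step1, decL_apply]
    have step2 : ((cycSet h).orderIsoOfFin rfl)
        ⟨(((cycSet h).orderIsoOfFin rfl).symm ⟨x, hx⟩ : ℕ), hiS⟩ = ⟨x, hx⟩ := by
      rw [show (⟨(((cycSet h).orderIsoOfFin rfl).symm ⟨x, hx⟩ : ℕ), hiS⟩ : Fin _)
        = ((cycSet h).orderIsoOfFin rfl).symm ⟨x, hx⟩ from Fin.ext rfl]
      exact OrderIso.apply_symm_apply _ _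
    rw [step2]
  · have hxP : x ∉ pathSet (decodeF h) (decodeW h) (decode_unique h) := by
      rw [pathSet_decodeF]; exact hx
    rw [encodeF_apply_not_mem _ _ _ hxP, decodeF_apply_not_mem h hx]

noncomputable def joyal [NeZero n] :
    ({f : Fin n → Fin n // ∃! v, IsCyc f v} × Fin n) ≃ (Fin n → Fin n) where
  toFun q := encodeF q.1.1 q.2 q.1.2
  invFun h := (⟨decodeF h, decode_unique h⟩, decodeW h)
  left_inv q := by
    obtain ⟨⟨f, hu⟩, w⟩ := q
    simp only [Prod.mk.injEq, Subtype.mk.injEq]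
    exact ⟨decodeF_encodeF f w hu, decodeW_encodeF f w hu⟩
  right_inv h := encodeF_decodeF h

end

theorem card_unique_cyclic_vertex (n : ℕ) (hn : 1 ≤ n) :
    Nat.card {f : Fin n → Fin n // ∃! v : Fin n, ∃ k, 1 ≤ k ∧ f^[k] v = v}
      = n ^ (n - 1) := by
  haveI : NeZero n := ⟨by omega⟩
  have key : Nat.card {f : Fin n → Fin n // ∃! v, IsCyc f v} * n = n ^ n := by
    have hcong := Nat.card_congr (joyal (n := n))
    rw [Nat.card_prod] at hcong
    have h1 : Nat.card (Fin n) = n := by simp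
    have h2 : Nat.card (Fin n → Fin n) = n ^ n := by
      rw [Nat.card_eq_fintype_card, Fintype.card_fun]
      simp
    rw [h1, h2] at hcong
    exact hcong
  have key' : Nat.card {f : Fin n → Fin n // ∃! v : Fin n, ∃ k, 1 ≤ k ∧ f^[k] v = v} * n
      = n ^ n := key
  have hpow : n ^ (n - 1) * n = n ^ n := by
    rw [← pow_succ]
    congr 1
    omega
  exact Nat.eq_of_mul_eq_mul_right (by omega) (key'.trans hpow.symm)
end

section
/- If f : Fin n → Fin n is chosen uniformly at random, the probability that f has a unique cyclic vertex is 1/n. -/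
/-!
A function `g` with a single periodic point `r` is a tree rooted at the fixed point `r`, and the
count comes from Joyal's bijection between such trees with a marked vertex `v` and all functions.
Let `P` be the set of points on the path `v, g v, …, r`, listed in an order depending only on `P`;
sending the `i`-th listed point to `g^[i] v`, and agreeing with `g` off `P`, gives a function `f`
whose periodic points are exactly `P` (`coil`). Conversely, applying `f` to its periodic points
listed in that order gives a path, and sending each point of it to the next one, the last to itself,
recovers `g` (`straighten`). Hence these functions number `n ^ (n - 1)`.
-/

open Function Set

namespace Function

variable {α : Type*} {f g : α → α} {x r : α}

theorem iterate_mem_periodicPts_of_iterate_eq {i j : ℕ} (hij : i < j) (h : f^[i] x = f^[j] x) :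
    f^[i] x ∈ periodicPts f :=
  mk_mem_periodicPts (n := j - i) (by omega) <| by
    rw [IsPeriodicPt, IsFixedPt, ← iterate_add_apply, Nat.sub_add_cancel hij.le, h]

theorem exists_iterate_mem_periodicPts [Finite α] (f : α → α) (x : α) :
    ∃ m, f^[m] x ∈ periodicPts f := by
  obtain ⟨i, j, hne, h⟩ := Finite.exists_ne_map_eq_of_infinite (f^[·] x)
  rcases hne.lt_or_gt with hij | hij
  · exact ⟨i, iterate_mem_periodicPts_of_iterate_eq hij h⟩
  · exact ⟨j, iterate_mem_periodicPts_of_iterate_eq hij h.symm⟩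

theorem exists_iterate_mem_of_eqOn_compl {s : Set α} (hfg : EqOn f g sᶜ)
    (hx : ∃ m, f^[m] x ∈ s) : ∃ m, g^[m] x ∈ s := by
  obtain ⟨m, hm⟩ := hx
  induction m generalizing x with
  | zero => exact ⟨0, hm⟩
  | succ m ih =>
    by_cases hxs : x ∈ s
    · exact ⟨0, hxs⟩
    · obtain ⟨m', hm'⟩ := ih (x := f x) hm
      exact ⟨m' + 1, by rwa [iterate_succ_apply, ← hfg hxs]⟩

theorem periodicPts_eq_of_mapsTo_of_injOn [Finite α] {s : Set α} (hmaps : MapsTo f s s)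
    (hinj : InjOn f s) (hreach : ∀ x, ∃ m, f^[m] x ∈ s) : periodicPts f = s := by
  refine Subset.antisymm ?_ fun x hx ↦ ?_
  · rintro x ⟨p, hp, hper⟩
    obtain ⟨m, hm⟩ := hreach x
    have hback : f^[p * m - m] (f^[m] x) = x := by
      rw [← iterate_add_apply, Nat.sub_add_cancel (Nat.le_mul_of_pos_left m hp)]
      exact hper.mul_const m
    exact hback ▸ hmaps.iterate _ hm
  · have hper := (hmaps.restrict_inj.2 hinj).mem_periodicPts ⟨x, hx⟩
    exact Semiconj.mapsTo_periodicPts (g := Subtype.val) (fun _ ↦ rfl) hper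

theorem apply_eq_self_of_periodicPts_eq_singleton (h : periodicPts f = {r}) : f r = r := by
  simpa [h] using (bijOn_periodicPts f).mapsTo (h ▸ mem_singleton r)

noncomputable def preperiod (f : α → α) (x : α) : ℕ :=
  sInf {m | f^[m] x ∈ periodicPts f}

theorem iterate_preperiod_mem [Finite α] (f : α → α) (x : α) :
    f^[preperiod f x] x ∈ periodicPts f :=
  Nat.sInf_mem (exists_iterate_mem_periodicPts f x)

theorem iterate_notMem_of_lt_preperiod {i : ℕ} (hi : i < preperiod f x) :
    f^[i] x ∉ periodicPts f :=
  Nat.notMem_of_lt_sInf hi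

theorem preperiod_le {i : ℕ} (hi : f^[i] x ∈ periodicPts f) : preperiod f x ≤ i :=
  Nat.sInf_le hi

theorem injOn_iterate_Iic_preperiod : (Iic (preperiod f x)).InjOn (f^[·] x) := by
  intro i hi j hj h
  by_contra hne
  wlog hij : i < j generalizing i j
  · exact this hj hi h.symm (Ne.symm hne) (by omega)
  exact iterate_notMem_of_lt_preperiod (lt_of_lt_of_le hij hj)
    (iterate_mem_periodicPts_of_iterate_eq hij h)

theorem iterate_min_preperiod [Finite α] (h : periodicPts f = {r}) (i : ℕ) :
    f^[min i (preperiod f x)] x = f^[i] x := by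
  have hroot : f^[preperiod f x] x = r := by simpa [h] using iterate_preperiod_mem f x
  rcases le_total i (preperiod f x) with hi | hi
  · rw [min_eq_left hi]
  · rw [min_eq_right hi, ← Nat.sub_add_cancel hi, iterate_add_apply, hroot,
      iterate_fixed (apply_eq_self_of_periodicPts_eq_singleton h)]

end Function

namespace List

variable {α β : Type*} [Inhabited α] {L : List α} {i : ℕ}

def getClamp (L : List α) (i : ℕ) : α :=
  L.getD (min i (L.length - 1)) default

theorem getClamp_eq_getElem (hL : L ≠ []) (i : ℕ) :
    L.getClamp i = L[min i (L.length - 1)]'(by have := length_pos_iff.2 hL; omega) :=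
  getD_eq_getElem ..

theorem getClamp_of_le (h : L.length - 1 ≤ i) : L.getClamp i = L.getClamp (L.length - 1) := by
  simp only [getClamp, min_eq_right h, min_self]

theorem getClamp_mem (hL : L ≠ []) (i : ℕ) : L.getClamp i ∈ L := by
  rw [getClamp_eq_getElem hL]
  exact getElem_mem _

theorem getClamp_map [Inhabited β] (f : α → β) (hL : L ≠ []) (i : ℕ) :
    (L.map f).getClamp i = f (L.getClamp i) := by
  simp only [getClamp_eq_getElem hL, getClamp_eq_getElem (map_eq_nil_iff.not.2 hL), getElem_map,
    length_map]

variable [DecidableEq α]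

theorem getClamp_idxOf {x : α} (hx : x ∈ L) : L.getClamp (L.idxOf x) = x := by
  have hlt := idxOf_lt_length_iff.2 hx
  rw [getClamp, min_eq_left (by omega), getD_eq_getElem _ _ hlt, getElem_idxOf]

theorem idxOf_getClamp (hL : L.Nodup) (hne : L ≠ []) (i : ℕ) :
    L.idxOf (L.getClamp i) = min i (L.length - 1) := by
  rw [getClamp_eq_getElem hne, hL.idxOf_getElem]

theorem image_range_getClamp : (Finset.range L.length).image L.getClamp = L.toFinset := by
  ext x
  simp only [Finset.mem_image, Finset.mem_range, mem_toFinset]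
  constructor
  · rintro ⟨i, hi, rfl⟩
    exact getClamp_mem (ne_nil_of_length_pos (by omega)) i
  · exact fun hx ↦ ⟨_, idxOf_lt_length_iff.2 hx, getClamp_idxOf hx⟩

def succAlong (L : List α) (o : α → α) (x : α) : α :=
  if x ∈ L then L.getClamp (L.idxOf x + 1) else o x

theorem succAlong_of_notMem {o : α → α} {x : α} (hx : x ∉ L) : L.succAlong o x = o x :=
  if_neg hx

theorem succAlong_getClamp (hL : L.Nodup) (hne : L ≠ []) (o : α → α) (i : ℕ) :
    L.succAlong o (L.getClamp i) = L.getClamp (i + 1) := by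
  rw [succAlong, if_pos (getClamp_mem hne i), idxOf_getClamp hL hne]
  simp only [getClamp]
  congr 1
  omega

theorem iterate_succAlong_getClamp (hL : L.Nodup) (hne : L ≠ []) (o : α → α) (i j : ℕ) :
    (L.succAlong o)^[j] (L.getClamp i) = L.getClamp (i + j) := by
  have hsc : Function.Semiconj L.getClamp Nat.succ (L.succAlong o) :=
    fun i ↦ (succAlong_getClamp hL hne o i).symm
  rw [← hsc.iterate_right j i, Nat.succ_iterate]

end List

namespace Function

open List

variable {α : Type*} {f g : α → α} {x v r : α}

section Coil

variable [DecidableEq α]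

noncomputable def pathToCycle (g : α → α) (v : α) : Finset α :=
  (Finset.range (preperiod g v + 1)).image (g^[·] v)

noncomputable def coil (g : α → α) (v : α) (x : α) : α :=
  if x ∈ pathToCycle g v then g^[(pathToCycle g v).toList.idxOf x] v else g x

theorem mem_pathToCycle : x ∈ pathToCycle g v ↔ ∃ i ≤ preperiod g v, g^[i] v = x := by
  simp [pathToCycle]

theorem length_toList_pathToCycle :
    (pathToCycle g v).toList.length = preperiod g v + 1 := by
  rw [Finset.length_toList, pathToCycle, Finset.card_image_of_injOn, Finset.card_range]
  intro i hi j hj h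
  simp only [Finset.coe_range, mem_Iio] at hi hj
  exact injOn_iterate_Iic_preperiod (Nat.lt_succ_iff.1 hi) (Nat.lt_succ_iff.1 hj) h

theorem coil_of_mem (hx : x ∈ pathToCycle g v) :
    coil g v x = g^[(pathToCycle g v).toList.idxOf x] v :=
  if_pos hx

theorem idxOf_toList_pathToCycle_le (hx : x ∈ pathToCycle g v) :
    (pathToCycle g v).toList.idxOf x ≤ preperiod g v := by
  have := idxOf_lt_length_iff.2 (Finset.mem_toList.2 hx)
  rw [length_toList_pathToCycle] at this
  omega

end Coil

variable [Finite α]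

noncomputable def periodicPtsFinset (f : α → α) : Finset α :=
  (toFinite (periodicPts f)).toFinset

@[simp]
theorem mem_periodicPtsFinset : x ∈ periodicPtsFinset f ↔ x ∈ periodicPts f :=
  Finite.mem_toFinset _

noncomputable def spine (f : α → α) : List α :=
  (periodicPtsFinset f).toList.map f

theorem nodup_spine : (spine f).Nodup :=
  (Finset.nodup_toList _).map_on fun _ hx _ hy h ↦
    (bijOn_periodicPts f).injOn (by simpa using hx) (by simpa using hy) h

theorem mem_spine : x ∈ spine f ↔ x ∈ periodicPts f := by
  simp only [spine, List.mem_map, Finset.mem_toList, mem_periodicPtsFinset]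
  exact ⟨fun ⟨_, hy, hyx⟩ ↦ hyx ▸ (bijOn_periodicPts f).mapsTo hy,
    fun hx ↦ (bijOn_periodicPts f).surjOn hx⟩

theorem spine_ne_nil [Nonempty α] : spine f ≠ [] :=
  have ⟨_, hm⟩ := exists_iterate_mem_periodicPts f (Classical.arbitrary α)
  ne_nil_of_mem (mem_spine.2 hm)

variable [DecidableEq α]

theorem periodicPts_coil (h : periodicPts g = {r}) :
    periodicPts (coil g v) = pathToCycle g v := by
  apply periodicPts_eq_of_mapsTo_of_injOn
  · intro x hx
    rw [Finset.mem_coe, coil_of_mem hx]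
    exact mem_pathToCycle.2 ⟨_, idxOf_toList_pathToCycle_le hx, rfl⟩
  · intro x hx y hy hxy
    rw [Finset.mem_coe] at hx hy
    rw [coil_of_mem hx, coil_of_mem hy] at hxy
    exact (idxOf_inj (Finset.mem_toList.2 hx)).1 <| injOn_iterate_Iic_preperiod
      (idxOf_toList_pathToCycle_le hx) (idxOf_toList_pathToCycle_le hy) hxy
  · intro x
    have hroot : r ∈ pathToCycle g v := by
      have := iterate_preperiod_mem g v
      rw [h, mem_singleton_iff] at this
      exact mem_pathToCycle.2 ⟨_, le_rfl, this⟩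
    refine exists_iterate_mem_of_eqOn_compl (fun y hy ↦ (if_neg hy).symm) ?_
    obtain ⟨m, hm⟩ := exists_iterate_mem_periodicPts g x
    rw [h, mem_singleton_iff] at hm
    exact ⟨m, hm ▸ hroot⟩

variable [Inhabited α]

noncomputable def straighten (f : α → α) : α → α :=
  (spine f).succAlong f

theorem iterate_straighten (i : ℕ) :
    (straighten f)^[i] ((spine f).getClamp 0) = (spine f).getClamp i := by
  rw [straighten, iterate_succAlong_getClamp nodup_spine spine_ne_nil, zero_add]

theorem periodicPts_straighten :
    periodicPts (straighten f) = {(spine f).getClamp ((spine f).length - 1)} := by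
  apply periodicPts_eq_of_mapsTo_of_injOn
  · intro x hx
    rw [mem_singleton_iff.1 hx, straighten, succAlong_getClamp nodup_spine spine_ne_nil,
      mem_singleton_iff, getClamp_of_le (i := _ + 1) (by omega)]
  · exact injOn_singleton _ _
  · intro x
    have hreach : ∃ m, (straighten f)^[m] x ∈ {y | y ∈ spine f} :=
      exists_iterate_mem_of_eqOn_compl (fun _ hy ↦ (succAlong_of_notMem hy).symm)
        ((exists_iterate_mem_periodicPts f x).imp fun _ ↦ mem_spine.2)
    obtain ⟨m, hm⟩ := hreach
    refine ⟨(spine f).length + m, ?_⟩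
    rw [iterate_add_apply, ← getClamp_idxOf hm, straighten,
      iterate_succAlong_getClamp nodup_spine spine_ne_nil, mem_singleton_iff,
      getClamp_of_le (i := _ + _) (by omega)]

theorem preperiod_straighten :
    preperiod (straighten f) ((spine f).getClamp 0) = (spine f).length - 1 := by
  refine le_antisymm (preperiod_le ?_) (not_lt.1 fun hlt ↦ ?_)
  · rw [iterate_straighten, periodicPts_straighten]
    rfl
  · have hmem := iterate_preperiod_mem (straighten f) ((spine f).getClamp 0)
    rw [iterate_straighten, periodicPts_straighten, mem_singleton_iff] at hmem
    have := congrArg (spine f).idxOf hmem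
    rw [idxOf_getClamp nodup_spine spine_ne_nil, idxOf_getClamp nodup_spine spine_ne_nil] at this
    omega

theorem pathToCycle_straighten :
    pathToCycle (straighten f) ((spine f).getClamp 0) = periodicPtsFinset f := by
  have hlen : 0 < (spine f).length := length_pos_iff.2 spine_ne_nil
  rw [pathToCycle, preperiod_straighten, Nat.sub_add_cancel hlen]
  simp only [iterate_straighten, image_range_getClamp]
  ext x
  simp [mem_spine]

theorem coil_straighten (f : α → α) :
    coil (straighten f) ((spine f).getClamp 0) = f := by
  funext x
  rw [coil, pathToCycle_straighten]
  split_ifs with hx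
  · have hne : (periodicPtsFinset f).toList ≠ [] := ne_nil_of_mem (Finset.mem_toList.2 hx)
    rw [iterate_straighten, spine, getClamp_map f hne, getClamp_idxOf (Finset.mem_toList.2 hx)]
  · exact succAlong_of_notMem (mt mem_spine.1 (by simpa using hx))

theorem getClamp_spine_coil (h : periodicPts g = {r}) (i : ℕ) :
    (spine (coil g v)).getClamp i = g^[i] v := by
  have hfin : periodicPtsFinset (coil g v) = pathToCycle g v := by
    ext x
    rw [mem_periodicPtsFinset, periodicPts_coil h, Finset.mem_coe]
  have hne : (pathToCycle g v).toList ≠ [] :=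
    ne_nil_of_length_pos (by rw [length_toList_pathToCycle]; omega)
  rw [spine, hfin, getClamp_map _ hne, coil_of_mem (Finset.mem_toList.1 (getClamp_mem hne i)),
    idxOf_getClamp (Finset.nodup_toList _) hne, length_toList_pathToCycle, Nat.add_sub_cancel,
    iterate_min_preperiod h]

theorem straighten_coil (h : periodicPts g = {r}) : straighten (coil g v) = g := by
  funext x
  by_cases hx : x ∈ spine (coil g v)
  · rw [← getClamp_idxOf hx, straighten, succAlong_getClamp nodup_spine (ne_nil_of_mem hx),
      getClamp_spine_coil h, getClamp_spine_coil h, iterate_succ_apply']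
  · rw [straighten, succAlong_of_notMem hx, coil, if_neg]
    rwa [mem_spine, periodicPts_coil h, Finset.mem_coe] at hx

noncomputable def uniquePeriodicPtProdEquiv :
    {g : α → α // ∃! r, r ∈ periodicPts g} × α ≃ (α → α) where
  toFun p := coil p.1 p.2
  invFun f := (⟨straighten f, by rw [periodicPts_straighten]; exact ⟨_, rfl, fun _ ↦ id⟩⟩,
    (spine f).getClamp 0)
  left_inv := by
    rintro ⟨⟨g, r, hr, huniq⟩, v⟩
    have h : periodicPts g = {r} := eq_singleton_iff_unique_mem.2 ⟨hr, huniq⟩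
    ext x
    · exact congrFun (straighten_coil h) x
    · exact getClamp_spine_coil h 0
  right_inv := coil_straighten

end Function

open Function in
theorem card_uniquePeriodicPt_mul_card {α : Type*} [Finite α] [Nonempty α] :
    Nat.card {g : α → α // ∃! r, r ∈ periodicPts g} * Nat.card α = Nat.card α ^ Nat.card α := by
  classical
  inhabit α
  rw [← Nat.card_prod, Nat.card_congr uniquePeriodicPtProdEquiv, Nat.card_fun]

theorem prob_unique_cyclic_vertex (n : ℕ) (hn : 1 ≤ n) :
    (Nat.card {f : Fin n → Fin n // ∃! v : Fin n, ∃ k, 1 ≤ k ∧ f^[k] v = v} : ℚ)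
      / (Nat.card (Fin n → Fin n) : ℚ) = 1 / n := by
  have : NeZero n := ⟨by omega⟩
  have hcount := card_uniquePeriodicPt_mul_card (α := Fin n)
  rw [Nat.card_eq_fintype_card (α := Fin n), Fintype.card_fin] at hcount
  have hn0 : (n : ℚ) ≠ 0 := Nat.cast_ne_zero.2 (by omega)
  rw [Nat.card_fun, Nat.card_eq_fintype_card (α := Fin n), Fintype.card_fin, Nat.cast_pow,
    div_eq_div_iff (pow_ne_zero _ hn0) hn0, one_mul]
  exact_mod_cast hcount
end

section
/- There is a bijection between functions f : Fin n → Fin n with a unique cyclic vertex and rooted labelled trees on Fin n: given such f with unique cyclic vertex r, the graph with edges {v, f(v)} for v ≠ r is a tree, and r is taken as the root; conversely every rooted tree arises from exactly one such f. -/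
open SimpleGraph Function

namespace CyclicTreeAux

variable {n : ℕ}

/-- the graph associated to `f` and root `r`. -/
def gr (f : Fin n → Fin n) (r : Fin n) : SimpleGraph (Fin n) :=
  SimpleGraph.fromRel (fun v w => v ≠ r ∧ w = f v)

section Forward

variable {f : Fin n → Fin n} {r : Fin n}

lemma not_fix (hc : ∀ v : Fin n, (∃ k, 1 ≤ k ∧ f^[k] v = v) → v = r)
    (v : Fin n) (hv : v ≠ r) : f v ≠ v :=
  fun h => hv (hc v ⟨1, le_refl 1, by simpa using h⟩)

lemma iterate_eq_root (hc : ∀ v : Fin n, (∃ k, 1 ≤ k ∧ f^[k] v = v) → v = r)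
    (v : Fin n) {i j : ℕ} (hij : i < j) (h : f^[i] v = f^[j] v) : f^[i] v = r := by
  apply hc
  refine ⟨j - i, by omega, ?_⟩
  rw [← Function.iterate_add_apply, show j - i + i = j by omega]
  exact h.symm

lemma exists_hit (hc : ∀ v : Fin n, (∃ k, 1 ≤ k ∧ f^[k] v = v) → v = r)
    (v : Fin n) : ∃ m, f^[m] v = r := by
  obtain ⟨i, j, hne, h⟩ := Finite.exists_ne_map_eq_of_infinite (fun i : ℕ => f^[i] v)
  rcases hne.lt_or_gt with h' | h'
  · exact ⟨i, iterate_eq_root hc v h' h⟩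
  · exact ⟨j, iterate_eq_root hc v h' h.symm⟩

lemma adj_f (hc : ∀ v : Fin n, (∃ k, 1 ≤ k ∧ f^[k] v = v) → v = r)
    (v : Fin n) (hv : v ≠ r) : (gr f r).Adj v (f v) := by
  rw [gr, fromRel_adj]
  exact ⟨fun h => not_fix hc v hv h.symm, Or.inl ⟨hv, rfl⟩⟩

/-- the iterate walk. -/
def iterWalk (G : SimpleGraph (Fin n)) (f : Fin n → Fin n) :
    (k : ℕ) → (v : Fin n) → (∀ i < k, G.Adj (f^[i] v) (f^[i + 1] v)) → G.Walk v (f^[k] v)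
  | 0, _, _ => Walk.nil
  | (k+1), v, h =>
      Walk.cons (by simpa using h 0 (Nat.succ_pos k))
        ((iterWalk G f k (f v) (fun i hi => by
            have := h (i+1) (by omega)
            simpa [Function.iterate_succ_apply] using this)).copy rfl
          (Function.iterate_succ_apply f k v).symm)

lemma iterWalk_support (G : SimpleGraph (Fin n)) (f : Fin n → Fin n) :
    ∀ (k : ℕ) (v : Fin n) (h : ∀ i < k, G.Adj (f^[i] v) (f^[i + 1] v)),
      (iterWalk G f k v h).support = (List.range (k+1)).map (fun i => f^[i] v)
  | 0, v, h => by simp [iterWalk]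
  | (k+1), v, h => by
      rw [iterWalk]
      rw [Walk.support_cons, Walk.support_copy,
        iterWalk_support G f k (f v) _]
      rw [List.range_succ_eq_map]
      simp [List.map_map, Function.comp_def, Function.iterate_succ_apply]

lemma iterWalk_getVert (G : SimpleGraph (Fin n)) (f : Fin n → Fin n)
    (k : ℕ) (v : Fin n) (h : ∀ i < k, G.Adj (f^[i] v) (f^[i + 1] v)) (hk : k ≠ 0) :
    (iterWalk G f k v h).getVert 1 = f v := by
  match k with
  | (k+1) =>
    rw [iterWalk]
    simp [Walk.getVert_cons_succ, Walk.getVert_copy, Walk.getVert_zero]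

noncomputable def depp (hc : ∀ v : Fin n, (∃ k, 1 ≤ k ∧ f^[k] v = v) → v = r)
    (v : Fin n) : ℕ := Nat.find (exists_hit hc v)

lemma depp_spec (hc : ∀ v : Fin n, (∃ k, 1 ≤ k ∧ f^[k] v = v) → v = r)
    (v : Fin n) : f^[depp hc v] v = r := Nat.find_spec (exists_hit hc v)

lemma depp_min (hc : ∀ v : Fin n, (∃ k, 1 ≤ k ∧ f^[k] v = v) → v = r)
    (v : Fin n) {i : ℕ} (hi : i < depp hc v) : f^[i] v ≠ r :=
  Nat.find_min (exists_hit hc v) hi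

lemma depp_ne_zero (hc : ∀ v : Fin n, (∃ k, 1 ≤ k ∧ f^[k] v = v) → v = r)
    (v : Fin n) (hv : v ≠ r) : depp hc v ≠ 0 := by
  intro h
  exact hv (by simpa [h] using depp_spec hc v)

lemma iterWalk_adj (hc : ∀ v : Fin n, (∃ k, 1 ≤ k ∧ f^[k] v = v) → v = r)
    (v : Fin n) : ∀ i < depp hc v, (gr f r).Adj (f^[i] v) (f^[i + 1] v) := by
  intro i hi
  have := adj_f hc (f^[i] v) (depp_min hc v hi)
  rwa [← Function.iterate_succ_apply' f i v] at this

noncomputable def walkToRoot (hc : ∀ v : Fin n, (∃ k, 1 ≤ k ∧ f^[k] v = v) → v = r)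
    (v : Fin n) : (gr f r).Walk v r :=
  (iterWalk (gr f r) f (depp hc v) v (iterWalk_adj hc v)).copy rfl (depp_spec hc v)

lemma walkToRoot_isPath (hc : ∀ v : Fin n, (∃ k, 1 ≤ k ∧ f^[k] v = v) → v = r)
    (v : Fin n) : (walkToRoot hc v).IsPath := by
  rw [Walk.isPath_def, walkToRoot, Walk.support_copy, iterWalk_support]
  refine (List.nodup_range.map_on ?_)
  intro i hi j hj hij
  simp only [List.mem_range] at hi hj
  by_contra hne
  rcases Nat.lt_or_ge i j with h | h
  · exact depp_min hc v (show i < depp hc v by omega) (iterate_eq_root hc v h hij)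
  · have h' : j < i := by omega
    exact depp_min hc v (show j < depp hc v by omega) (iterate_eq_root hc v h' hij.symm)

lemma walkToRoot_getVert (hc : ∀ v : Fin n, (∃ k, 1 ≤ k ∧ f^[k] v = v) → v = r)
    (v : Fin n) (hv : v ≠ r) : (walkToRoot hc v).getVert 1 = f v := by
  rw [walkToRoot, Walk.getVert_copy]
  exact iterWalk_getVert _ _ _ _ _ (depp_ne_zero hc v hv)

lemma gr_connected (hc : ∀ v : Fin n, (∃ k, 1 ≤ k ∧ f^[k] v = v) → v = r) :
    (gr f r).Connected := by
  rw [connected_iff]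
  refine ⟨fun u v => ?_, ⟨r⟩⟩
  exact ⟨(walkToRoot hc u).append (walkToRoot hc v).reverse⟩

lemma gr_bridge (hc : ∀ v : Fin n, (∃ k, 1 ≤ k ∧ f^[k] v = v) → v = r)
    (v : Fin n) (hv : v ≠ r) : (gr f r).IsBridge s(v, f v) := by
  rw [isBridge_iff]
  rintro ⟨p⟩
  have hvS : v ∈ {u : Fin n | ∃ i, f^[i] u = v} := ⟨0, rfl⟩
  have hfvS : f v ∉ {u : Fin n | ∃ i, f^[i] u = v} := by
    rintro ⟨i, hi⟩
    exact hv (hc v ⟨i + 1, by omega, by rwa [Function.iterate_succ_apply]⟩)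
  obtain ⟨d, _, hdS, hdS'⟩ := p.exists_boundary_dart _ hvS hfvS
  have hadj := d.adj
  change ((gr f r) \ fromEdgeSet {s(v, f v)}).Adj _ _ at hadj
  rw [sdiff_adj, fromEdgeSet_adj] at hadj
  obtain ⟨hGadj, hne⟩ := hadj
  have hne' : s(d.fst, d.snd) ≠ s(v, f v) := by
    intro h
    exact hne ⟨by simpa using h, hGadj.ne⟩
  simp only [gr, fromRel_adj] at hGadj
  obtain ⟨hneq, hcase⟩ := hGadj
  rcases hcase with ⟨h1, h2⟩ | ⟨h1, h2⟩
  · by_cases hdv : d.fst = v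
    · exact hne' (by rw [hdv, h2, hdv])
    · obtain ⟨i, hi⟩ := hdS
      refine hdS' ⟨i - 1, ?_⟩
      have hi0 : i ≠ 0 := by rintro rfl; exact hdv hi
      rw [h2, ← Function.iterate_succ_apply, show (i - 1).succ = i by omega]
      exact hi
  · obtain ⟨i, hi⟩ := hdS
    refine hdS' ⟨i + 1, ?_⟩
    rw [Function.iterate_succ_apply, ← h2]
    exact hi

lemma gr_isTree (hc : ∀ v : Fin n, (∃ k, 1 ≤ k ∧ f^[k] v = v) → v = r) :
    (gr f r).IsTree := by
  refine ⟨gr_connected hc, ?_⟩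
  rw [isAcyclic_iff_forall_adj_isBridge]
  intro a b hab
  have h := hab
  simp only [gr, fromRel_adj] at h
  rcases h.2 with ⟨h1, rfl⟩ | ⟨h1, rfl⟩
  · exact gr_bridge hc a h1
  · rw [Sym2.eq_swap]
    exact gr_bridge hc b h1

end Forward

section Backward

variable {G : SimpleGraph (Fin n)} {r : Fin n}

/-- the unique path from `v` to `r`. -/
noncomputable def pth (hG : ∀ v w : Fin n, ∃! p : G.Walk v w, p.IsPath) (r v : Fin n) :
    G.Walk v r := (hG v r).choose

lemma pth_isPath (hG : ∀ v w : Fin n, ∃! p : G.Walk v w, p.IsPath) (v : Fin n) :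
    (pth hG r v).IsPath := (hG v r).choose_spec.1

lemma pth_unique (hG : ∀ v w : Fin n, ∃! p : G.Walk v w, p.IsPath) {v : Fin n}
    (q : G.Walk v r) (hq : q.IsPath) : q = pth hG r v := (hG v r).choose_spec.2 q hq

lemma pth_r (hG : ∀ v w : Fin n, ∃! p : G.Walk v w, p.IsPath) :
    pth hG r r = Walk.nil := (pth_unique hG Walk.nil Walk.IsPath.nil).symm

/-- parent function of the tree rooted at `r`. -/
noncomputable def parent (hG : ∀ v w : Fin n, ∃! p : G.Walk v w, p.IsPath) (r v : Fin n) :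
    Fin n := (pth hG r v).getVert 1

lemma parent_r (hG : ∀ v w : Fin n, ∃! p : G.Walk v w, p.IsPath) :
    parent hG r r = r := by
  rw [parent, pth_r]
  rfl

lemma parent_spec (hG : ∀ v w : Fin n, ∃! p : G.Walk v w, p.IsPath) {v : Fin n}
    (hvr : v ≠ r) : G.Adj v (parent hG r v) ∧
      (pth hG r (parent hG r v)).length + 1 = (pth hG r v).length := by
  obtain ⟨w, ha, q, hq⟩ := Walk.exists_eq_cons_of_ne hvr (pth hG r v)
  have hw : parent hG r v = w := by
    rw [parent, hq, Walk.getVert_cons_succ, Walk.getVert_zero]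
  have hqp : q.IsPath := by
    have := pth_isPath hG (r := r) v
    rw [hq] at this
    exact this.of_cons
  have hq' : q = pth hG r w := pth_unique hG q hqp
  rw [hw]
  exact ⟨ha, by rw [hq, ← hq', Walk.length_cons]⟩

lemma len_parent_lt (hG : ∀ v w : Fin n, ∃! p : G.Walk v w, p.IsPath) {v : Fin n}
    (hvr : v ≠ r) : (pth hG r (parent hG r v)).length < (pth hG r v).length := by
  have := (parent_spec hG hvr).2
  omega

lemma len_parent_le (hG : ∀ v w : Fin n, ∃! p : G.Walk v w, p.IsPath) (v : Fin n) :
    (pth hG r (parent hG r v)).length ≤ (pth hG r v).length := by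
  by_cases hvr : v = r
  · subst hvr
    rw [parent_r]
  · exact (len_parent_lt hG hvr).le

lemma len_iter_le (hG : ∀ v w : Fin n, ∃! p : G.Walk v w, p.IsPath) :
    ∀ (k : ℕ) (v : Fin n),
      (pth hG r ((parent hG r)^[k] v)).length ≤ (pth hG r v).length
  | 0, v => le_refl _
  | (k+1), v => by
      rw [Function.iterate_succ_apply]
      exact (len_iter_le hG k (parent hG r v)).trans (len_parent_le hG v)

lemma cyc_unique (hG : ∀ v w : Fin n, ∃! p : G.Walk v w, p.IsPath) (v : Fin n)
    (h : ∃ k, 1 ≤ k ∧ (parent hG r)^[k] v = v) : v = r := by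
  by_contra hvr
  obtain ⟨k, hk, hkv⟩ := h
  have h1 := len_iter_le hG (r := r) (k - 1) (parent hG r v)
  rw [← Function.iterate_succ_apply, show (k - 1).succ = k by omega, hkv] at h1
  exact absurd h1 (not_le.mpr (len_parent_lt hG hvr))

lemma parent_existsUnique (hG : ∀ v w : Fin n, ∃! p : G.Walk v w, p.IsPath) :
    ∃! v : Fin n, ∃ k, 1 ≤ k ∧ (parent hG r)^[k] v = v := by
  refine ⟨r, ⟨1, le_refl 1, by simp [parent_r]⟩, fun y hy => cyc_unique hG y hy⟩

lemma gr_parent_eq (hG : ∀ v w : Fin n, ∃! p : G.Walk v w, p.IsPath) :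
    gr (parent hG r) r = G := by
  ext a b
  simp only [gr, fromRel_adj]
  constructor
  · rintro ⟨hab, ⟨har, rfl⟩ | ⟨hbr, rfl⟩⟩
    · exact (parent_spec hG har).1
    · exact ((parent_spec hG hbr).1).symm
  · intro hab
    refine ⟨hab.ne, ?_⟩
    by_cases hb : b ∈ (pth hG r a).support
    · left
      have har : a ≠ r := by
        rintro rfl
        rw [pth_r] at hb
        simp only [Walk.support_nil, List.mem_singleton] at hb
        exact G.irrefl (hb ▸ hab)
      refine ⟨har, ?_⟩
      have ht : ((pth hG r a).takeUntil b hb).IsPath := (pth_isPath hG a).takeUntil hb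
      have hcons : (Walk.cons hab Walk.nil).IsPath := by
        simp [Walk.isPath_def, hab.ne]
      have heq : (pth hG r a).takeUntil b hb = Walk.cons hab Walk.nil :=
        (hG a b).unique ht hcons
      have hspec := (pth hG r a).take_spec hb
      rw [heq, Walk.cons_append, Walk.nil_append] at hspec
      rw [parent, ← hspec, Walk.getVert_cons_succ, Walk.getVert_zero]
    · right
      have hbr : b ≠ r := fun h => hb (h ▸ (pth hG r a).end_mem_support)
      refine ⟨hbr, ?_⟩
      have hcons : (Walk.cons hab.symm (pth hG r a)).IsPath :=
        (pth_isPath hG a).cons hb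
      have heq := pth_unique hG _ hcons
      rw [parent, ← heq, Walk.getVert_cons_succ, Walk.getVert_zero]

/-- parent of the graph `gr f r` is `f`. -/
lemma parent_gr_eq {f : Fin n → Fin n}
    (hc : ∀ v : Fin n, (∃ k, 1 ≤ k ∧ f^[k] v = v) → v = r) (hfr : f r = r)
    (hG : ∀ v w : Fin n, ∃! p : (gr f r).Walk v w, p.IsPath) (v : Fin n) :
    parent hG r v = f v := by
  by_cases hvr : v = r
  · subst hvr
    rw [parent_r, hfr]
  · have hw := pth_unique hG (walkToRoot hc v) (walkToRoot_isPath hc v)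
    rw [parent, ← hw]
    exact walkToRoot_getVert hc v hvr

end Backward

noncomputable def fwd {n : ℕ} (F : {f : Fin n → Fin n // ∃! v : Fin n, ∃ k, 1 ≤ k ∧ f^[k] v = v}) :
    {p : SimpleGraph (Fin n) × Fin n // p.1.IsTree} :=
  ⟨(gr F.1 F.2.choose, F.2.choose), gr_isTree (fun v hv => F.2.choose_spec.2 v hv)⟩

noncomputable def bwd {n : ℕ} (P : {p : SimpleGraph (Fin n) × Fin n // p.1.IsTree}) :
    {f : Fin n → Fin n // ∃! v : Fin n, ∃ k, 1 ≤ k ∧ f^[k] v = v} :=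
  ⟨parent P.2.existsUnique_path P.1.2, parent_existsUnique P.2.existsUnique_path⟩

lemma left_inv {n : ℕ} (F : {f : Fin n → Fin n // ∃! v : Fin n, ∃ k, 1 ≤ k ∧ f^[k] v = v}) :
    bwd (fwd F) = F := by
  have hc : ∀ v : Fin n, (∃ k, 1 ≤ k ∧ F.1^[k] v = v) → v = F.2.choose :=
    fun v hv => F.2.choose_spec.2 v hv
  have hfr : F.1 F.2.choose = F.2.choose := by
    obtain ⟨k, hk, hkr⟩ := F.2.choose_spec.1
    exact F.2.choose_spec.2 _ ⟨k, hk, by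
      rw [← Function.iterate_succ_apply, Function.iterate_succ_apply', hkr]⟩
  apply Subtype.ext
  funext v
  exact parent_gr_eq hc hfr (fwd F).2.existsUnique_path v

lemma right_inv {n : ℕ} (P : {p : SimpleGraph (Fin n) × Fin n // p.1.IsTree}) :
    fwd (bwd P) = P := by
  have hc : (bwd P).2.choose = P.1.2 :=
    cyc_unique P.2.existsUnique_path _ (bwd P).2.choose_spec.1
  apply Subtype.ext
  refine Prod.ext ?_ ?_
  · show gr (parent P.2.existsUnique_path P.1.2) (bwd P).2.choose = P.1.1
    rw [hc]
    exact gr_parent_eq P.2.existsUnique_path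
  · exact hc

end CyclicTreeAux

theorem bijection_unique_cyclic_rooted_trees (n : ℕ) :
    ∃ e : {f : Fin n → Fin n // ∃! v : Fin n, ∃ k, 1 ≤ k ∧ f^[k] v = v}
        ≃ {p : SimpleGraph (Fin n) × Fin n // p.1.IsTree},
      ∀ (F : {f : Fin n → Fin n // ∃! v : Fin n, ∃ k, 1 ≤ k ∧ f^[k] v = v})
        (r : Fin n), (∃ k, 1 ≤ k ∧ F.1^[k] r = r) →
          (e F).1.2 = r ∧
          (e F).1.1 = SimpleGraph.fromRel (fun v w => v ≠ r ∧ w = F.1 v) := by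
  classical
  refine ⟨⟨CyclicTreeAux.fwd, CyclicTreeAux.bwd, CyclicTreeAux.left_inv,
    CyclicTreeAux.right_inv⟩, ?_⟩
  intro F r hr
  have hr' : r = F.2.choose := F.2.choose_spec.2 r hr
  subst hr'
  exact ⟨rfl, rfl⟩
end

section
/- A function f : Fin n → Fin n has a unique cyclic vertex if and only if there exists a vertex r with f(r) = r and for every vertex v there exists k ≥ 0 with f^k(v) = r. -/
private lemma enters_cycle (n : ℕ) (f : Fin n → Fin n) (w : Fin n) :
    ∃ i m, 1 ≤ m ∧ f^[m] (f^[i] w) = f^[i] w := by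
  obtain ⟨a, b, hab, heq⟩ :=
    Finite.exists_ne_map_eq_of_infinite (fun k : ℕ => f^[k] w)
  rcases lt_or_gt_of_ne hab with h | h
  · refine ⟨a, b - a, by omega, ?_⟩
    rw [← Function.iterate_add_apply]
    have : b - a + a = b := by omega
    rw [this]; exact heq.symm
  · refine ⟨b, a - b, by omega, ?_⟩
    rw [← Function.iterate_add_apply]
    have : a - b + b = a := by omega
    rw [this]; exact heq

theorem unique_cyclic_iff_fixed_point_attracting (n : ℕ) (f : Fin n → Fin n) :
    (∃! v : Fin n, ∃ m, 1 ≤ m ∧ f^[m] v = v) ↔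
      ∃ r : Fin n, f r = r ∧ ∀ v : Fin n, ∃ k : ℕ, f^[k] v = r := by
  constructor
  · rintro ⟨v, ⟨m, hm, hv⟩, huniq⟩
    refine ⟨v, ?_, ?_⟩
    · have : f v = v := huniq (f v) ⟨m, hm, by
        rw [← Function.iterate_succ_apply, Function.iterate_succ_apply', hv]⟩
      exact this
    · intro w
      obtain ⟨i, m', hm', hcyc⟩ := enters_cycle n f w
      exact ⟨i, huniq (f^[i] w) ⟨m', hm', hcyc⟩⟩
  · rintro ⟨r, hr, hatt⟩
    refine ⟨r, ⟨1, le_refl 1, by simpa using hr⟩, ?_⟩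
    rintro v ⟨m, hm, hv⟩
    obtain ⟨k, hk⟩ := hatt v
    have hiter : ∀ s, f^[m * s] v = v := by
      intro s
      rw [Function.iterate_mul]
      exact Function.iterate_fixed hv s
    have h1 : m * (k + 1) ≥ k := by nlinarith
    have h2 : (m * (k + 1) - k) + k = m * (k + 1) := by omega
    calc v = f^[m * (k + 1)] v := (hiter (k + 1)).symm
      _ = f^[m * (k + 1) - k] (f^[k] v) := by rw [← Function.iterate_add_apply, h2]
      _ = r := by rw [hk]; exact Function.iterate_fixed hr _
end

section
/- If f : Fin n → Fin n has a unique cyclic vertex r, then the simple graph G on Fin n with an edge between v and f(v) for every v ≠ r is connected and has exactly n − 1 edges, hence is a tree. -/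
/-!
Every orbit of a self-map of a finite set eventually enters a cycle, so when `r` is the only
periodic point every vertex reaches `r` along the edges `v — f v`, and `G` is connected. These
edges are indexed injectively by the vertices `v ≠ r`: a coincidence `s(a, f a) = s(b, f b)` with
`a ≠ b` makes `a` a point of period two. So `G` has `n - 1` edges, and a connected graph on `n`
vertices with `n - 1` edges is a tree.
-/

open Function

theorem Function.exists_iterate_mem_periodicPts_s10 {α : Type*} [Finite α] (f : α → α) (x : α) :
    ∃ k, f^[k] x ∈ periodicPts f := by
  obtain ⟨i, j, hne, hij⟩ := Finite.exists_ne_map_eq_of_infinite fun k : ℕ => f^[k] x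
  wlog hlt : i < j generalizing i j
  · exact this j i hne.symm hij.symm (by omega)
  refine ⟨i, mk_mem_periodicPts (n := j - i) (by omega) ?_⟩
  rw [IsPeriodicPt, IsFixedPt, ← iterate_add_apply, Nat.sub_add_cancel hlt.le]
  exact hij.symm

theorem Function.injOn_sym2_mk_self_apply {α : Type*} {f : α → α} {r : α}
    (huniq : ∀ v ∈ periodicPts f, v = r) : Set.InjOn (fun v => s(v, f v)) {r}ᶜ := by
  intro a ha b _ hab
  rcases Sym2.eq_iff.mp hab with ⟨hab, -⟩ | ⟨hab, hba⟩
  · exact hab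
  · refine absurd (huniq a (mk_mem_periodicPts two_pos ?_)) ha
    change f (f a) = a
    rw [hba, ← hab]

namespace SimpleGraph

variable {α : Type*} {f : α → α} {r : α}

abbrev rootedFunctionalGraph (f : α → α) (r : α) : SimpleGraph α :=
  fromRel fun v w => v ≠ r ∧ w = f v

section UniquePeriodicPt

variable (huniq : ∀ v ∈ periodicPts f, v = r)
include huniq

theorem rootedFunctionalGraph_adj_apply {v : α} (hv : v ≠ r) :
    (rootedFunctionalGraph f r).Adj v (f v) := by
  refine (fromRel_adj _ _ _).mpr ⟨fun hfix => hv ?_, Or.inl ⟨hv, rfl⟩⟩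
  exact huniq v (mk_mem_periodicPts one_pos hfix.symm)

theorem rootedFunctionalGraph_reachable_of_iterate_eq {k : ℕ} {v : α} (hk : f^[k] v = r) :
    (rootedFunctionalGraph f r).Reachable v r := by
  induction k generalizing v with
  | zero => exact hk ▸ Reachable.refl v
  | succ k ih =>
    by_cases hv : v = r
    · exact hv ▸ Reachable.refl v
    · exact (rootedFunctionalGraph_adj_apply huniq hv).reachable.trans (ih hk)

theorem rootedFunctionalGraph_connected [Finite α] : (rootedFunctionalGraph f r).Connected := by
  have hreach (v : α) : (rootedFunctionalGraph f r).Reachable v r := by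
    obtain ⟨k, hk⟩ := exists_iterate_mem_periodicPts_s10 f v
    exact rootedFunctionalGraph_reachable_of_iterate_eq huniq (huniq _ hk)
  have : Nonempty α := ⟨r⟩
  exact connected_iff_exists_forall_reachable _ |>.mpr ⟨r, fun v => (hreach v).symm⟩

theorem rootedFunctionalGraph_edgeSet :
    (rootedFunctionalGraph f r).edgeSet = (fun v => s(v, f v)) '' {r}ᶜ := by
  ext e
  induction e with
  | _ x y =>
    simp only [mem_edgeSet, Set.mem_image, Set.mem_compl_singleton_iff]
    constructor
    · rw [fromRel_adj]
      rintro ⟨-, ⟨hx, rfl⟩ | ⟨hy, rfl⟩⟩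
      · exact ⟨x, hx, rfl⟩
      · exact ⟨y, hy, Sym2.eq_swap⟩
    · rintro ⟨v, hv, he⟩
      rw [← mem_edgeSet, ← he]
      exact rootedFunctionalGraph_adj_apply huniq hv

theorem rootedFunctionalGraph_ncard_edgeSet [Finite α] :
    (rootedFunctionalGraph f r).edgeSet.ncard = Nat.card α - 1 := by
  rw [rootedFunctionalGraph_edgeSet huniq, (injOn_sym2_mk_self_apply huniq).ncard_image,
    Set.ncard_compl, Set.ncard_singleton]

theorem rootedFunctionalGraph_isTree [Finite α] : (rootedFunctionalGraph f r).IsTree := by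
  have : Nonempty α := ⟨r⟩
  refine isTree_iff_connected_and_card.mpr ⟨rootedFunctionalGraph_connected huniq, ?_⟩
  rw [Nat.card_coe_set_eq, rootedFunctionalGraph_ncard_edgeSet huniq,
    Nat.sub_add_cancel Nat.card_pos]

end UniquePeriodicPt

end SimpleGraph

open SimpleGraph in
theorem functional_graph_is_tree_general (n : ℕ) (f : Fin n → Fin n) (r : Fin n)
    (huniq : ∀ v : Fin n, (∃ k, 1 ≤ k ∧ f^[k] v = v) → v = r) :
    let G : SimpleGraph (Fin n) := SimpleGraph.fromRel (fun v w => v ≠ r ∧ w = f v)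
    G.Connected ∧ G.edgeSet.ncard = n - 1 ∧ G.IsTree := by
  intro G
  have huniq' : ∀ v ∈ periodicPts f, v = r := fun v hv =>
    huniq v (by simpa [mem_periodicPts, IsPeriodicPt, IsFixedPt, Nat.one_le_iff_ne_zero,
      Nat.pos_iff_ne_zero] using hv)
  refine ⟨rootedFunctionalGraph_connected huniq', ?_, rootedFunctionalGraph_isTree huniq'⟩
  simpa using rootedFunctionalGraph_ncard_edgeSet huniq'

theorem functional_graph_is_tree (n : ℕ) (f : Fin n → Fin n) (r : Fin n)
    (hr : ∃ k, 1 ≤ k ∧ f^[k] r = r)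
    (huniq : ∀ v : Fin n, (∃ k, 1 ≤ k ∧ f^[k] v = v) → v = r) :
    let G : SimpleGraph (Fin n) := SimpleGraph.fromRel (fun v w => v ≠ r ∧ w = f v)
    G.Connected ∧ G.edgeSet.ncard = n - 1 ∧ G.IsTree :=
  functional_graph_is_tree_general n f r huniq
end

section
/- For each fixed vertex r, the number of functions f : Fin n → Fin n that have a unique cyclic vertex and whose unique cyclic vertex equals r is n^(n-2). -/
open Function List Finset
set_option linter.unusedSectionVars false
set_option maxHeartbeats 1000000

namespace CayleyAux

variable {n : ℕ} [NeZero n]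


variable {n : ℕ}

/-- In a finite type, every point is eventually periodic. -/
lemma exists_iter_periodic (f : Fin n → Fin n) (v : Fin n) :
    ∃ m, f^[m] v ∈ periodicPts f := by
  obtain ⟨i, j, hne, hij⟩ := Fintype.exists_ne_map_eq_of_card_lt
    (fun i : Fin (n + 1) => f^[(i : ℕ)] v) (by simp)
  have key : ∀ i j : ℕ, i < j → f^[i] v = f^[j] v → ∃ m, f^[m] v ∈ periodicPts f := by
    intro i j hlt he
    refine ⟨i, mk_mem_periodicPts (by omega : 0 < j - i) ?_⟩
    show f^[j - i] (f^[i] v) = f^[i] v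
    rw [← Function.iterate_add_apply]
    rw [show j - i + i = j by omega]
    exact he.symm
  rcases lt_or_gt_of_ne hne with h | h
  · exact key i j (Fin.lt_iff_val_lt_val.mp h) hij
  · exact key j i (Fin.lt_iff_val_lt_val.mp h) hij.symm

/-- Escape lemma: a periodic point of `h` outside an `h`-invariant set `C`,
where `h` agrees with `g` outside `C`, is a periodic point of `g`. -/
lemma periodicPts_of_agree {g h : Fin n → Fin n} {C : Finset (Fin n)}
    (hag : ∀ v ∉ C, h v = g v) (hinv : ∀ v ∈ C, h v ∈ C)
    {v : Fin n} (hv : v ∈ periodicPts h) (hvC : v ∉ C) : v ∈ periodicPts g := by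
  obtain ⟨m, hm0, hmp⟩ := mem_periodicPts.1 hv
  have horbC : ∀ j, h^[j] v ∉ C := by
    intro j hj
    have step : ∀ s, h^[j + s] v ∈ C := by
      intro s
      induction s with
      | zero => simpa using hj
      | succ s ih =>
        have : h^[j + (s + 1)] v = h (h^[j + s] v) := by
          rw [show j + (s+1) = (j+s) + 1 by omega, Function.iterate_succ_apply']
        rw [this]; exact hinv _ ih
    have hper : h^[m * (j + 1)] v = v := hmp.mul_const (j + 1)
    have hjm : j ≤ m * (j + 1) := le_trans (Nat.le_succ j) (Nat.le_mul_of_pos_left _ hm0)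
    have : h^[j + (m * (j + 1) - j)] v ∈ C := step _
    rw [show j + (m * (j + 1) - j) = m * (j + 1) by omega] at this
    rw [hper] at this
    exact hvC this
  have hgh : ∀ j, h^[j] v = g^[j] v := by
    intro j
    induction j with
    | zero => rfl
    | succ j ih =>
      rw [Function.iterate_succ_apply', Function.iterate_succ_apply', ← ih,
        hag _ (horbC j)]
  exact mem_periodicPts.2 ⟨m, hm0, by show g^[m] v = v; rw [← hgh]; exact hmp⟩

/-- Permutation lemma: if `h` maps `C` into `C` injectively, every point of `C`
is periodic for `h`. -/
lemma mem_periodicPts_of_injOn {h : Fin n → Fin n} {C : Finset (Fin n)}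
    (hinv : ∀ v ∈ C, h v ∈ C) (hinj : Set.InjOn h C)
    {v : Fin n} (hv : v ∈ C) : v ∈ periodicPts h := by
  have horbx : ∀ x ∈ C, ∀ j, h^[j] x ∈ C := by
    intro x hx j
    induction j with
    | zero => simpa using hx
    | succ j ih => rw [Function.iterate_succ_apply']; exact hinv _ ih
  have horb : ∀ j, h^[j] v ∈ C := horbx v hv
  have hiterinj : ∀ j, Set.InjOn h^[j] C := by
    intro j
    induction j with
    | zero => exact fun x _ y _ hxy => hxy
    | succ j ih =>
      intro x hx y hy hxy
      rw [Function.iterate_succ_apply', Function.iterate_succ_apply'] at hxy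
      exact ih hx hy (hinj (horbx x hx j) (horbx y hy j) hxy)
  obtain ⟨i, j, hne, hij⟩ := Fintype.exists_ne_map_eq_of_card_lt
    (fun i : Fin (C.card + 1) => (⟨h^[(i : ℕ)] v, horb _⟩ : {w // w ∈ C}))
    (by simp [Fintype.card_coe])
  have key : ∀ i j : ℕ, i < j → h^[i] v = h^[j] v → v ∈ periodicPts h := by
    intro i j hlt he
    have : h^[i] v = h^[i] (h^[j - i] v) := by
      rw [← Function.iterate_add_apply, show i + (j - i) = j by omega]
      exact he
    have hvv : v = h^[j - i] v := hiterinj i hv (horb _) this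
    exact mk_mem_periodicPts (by omega : 0 < j - i) hvv.symm
  simp only [Subtype.mk.injEq] at hij
  rcases lt_or_gt_of_ne hne with h' | h'
  · exact key i j (Fin.lt_iff_val_lt_val.mp h') hij
  · exact key j i (Fin.lt_iff_val_lt_val.mp h') hij.symm


variable {n : ℕ} [NeZero n]

/-- The `i`-th smallest element of `C` (junk for `i ≥ C.card`). -/
noncomputable def ent (C : Finset (Fin n)) (i : ℕ) : Fin n :=
  (C.sort (· ≤ ·)).getD i default

/-- The sorted rank of `v` in `C`. -/
noncomputable def sIdx (C : Finset (Fin n)) (v : Fin n) : ℕ :=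
  (C.sort (· ≤ ·)).idxOf v

lemma ent_mem {C : Finset (Fin n)} {i : ℕ} (hi : i < C.card) : ent C i ∈ C := by
  have hl : i < (C.sort (· ≤ ·)).length := by rwa [Finset.length_sort]
  rw [ent, List.getD_eq_getElem _ _ hl]
  exact (Finset.mem_sort _).1 (List.getElem_mem _)

lemma sIdx_lt {C : Finset (Fin n)} {v : Fin n} (hv : v ∈ C) : sIdx C v < C.card := by
  rw [sIdx, ← Finset.length_sort (α := Fin n) (· ≤ ·)]
  exact List.idxOf_lt_length_iff.2 ((Finset.mem_sort _).2 hv)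

lemma ent_sIdx {C : Finset (Fin n)} {v : Fin n} (hv : v ∈ C) : ent C (sIdx C v) = v := by
  have hl : sIdx C v < (C.sort (· ≤ ·)).length :=
    List.idxOf_lt_length_iff.2 ((Finset.mem_sort _).2 hv)
  rw [ent, List.getD_eq_getElem _ _ hl]
  exact List.getElem_idxOf hl

lemma sIdx_ent {C : Finset (Fin n)} {i : ℕ} (hi : i < C.card) : sIdx C (ent C i) = i := by
  have hl : i < (C.sort (· ≤ ·)).length := by rwa [Finset.length_sort]
  rw [ent, List.getD_eq_getElem _ _ hl, sIdx]
  exact (Finset.sort_nodup _ _).idxOf_getElem i hl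

lemma ent_inj {C : Finset (Fin n)} {i j : ℕ} (hi : i < C.card) (hj : j < C.card)
    (h : ent C i = ent C j) : i = j := by
  rw [← sIdx_ent hi, ← sIdx_ent hj, h]

lemma exists_ent {C : Finset (Fin n)} {v : Fin n} (hv : v ∈ C) :
    ∃ i, i < C.card ∧ ent C i = v := ⟨sIdx C v, sIdx_lt hv, ent_sIdx hv⟩




section Phi
variable (f : Fin n → Fin n)

/-- The finset of periodic points of `f`. -/
noncomputable def pC : Finset (Fin n) := (Set.toFinite (periodicPts f)).toFinset

lemma mem_pC {v : Fin n} : v ∈ pC f ↔ v ∈ periodicPts f := Set.Finite.mem_toFinset _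

lemma pC_card_pos : 0 < (pC f).card := by
  obtain ⟨m, hm⟩ := exists_iter_periodic f default
  exact Finset.card_pos.2 ⟨_, (mem_pC f).2 hm⟩

/-- `dseq f i = f (i-th smallest periodic point)`. -/
noncomputable def dseq (i : ℕ) : Fin n := f (ent (pC f) i)

lemma dseq_mem {i : ℕ} (hi : i < (pC f).card) : dseq f i ∈ pC f := by
  rw [mem_pC]
  exact (bijOn_periodicPts f).mapsTo ((mem_pC f).1 (ent_mem hi))

lemma dseq_inj {i j : ℕ} (hi : i < (pC f).card) (hj : j < (pC f).card)
    (h : dseq f i = dseq f j) : i = j := by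
  refine ent_inj hi hj ?_
  exact (bijOn_periodicPts f).injOn ((mem_pC f).1 (ent_mem hi)) ((mem_pC f).1 (ent_mem hj)) h

lemma exists_dseq {v : Fin n} (hv : v ∈ pC f) : ∃ i, i < (pC f).card ∧ dseq f i = v := by
  obtain ⟨w, hw, hwv⟩ := (bijOn_periodicPts f).surjOn ((mem_pC f).1 hv)
  obtain ⟨i, hi, hie⟩ := exists_ent ((mem_pC f).2 hw)
  exact ⟨i, hi, by rw [dseq, hie]; exact hwv⟩

/-- index of `v` in the `dseq` enumeration. -/
noncomputable def iIdx (v : Fin n) : ℕ :=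
  if h : ∃ i, i < (pC f).card ∧ dseq f i = v then Nat.find h else 0

lemma iIdx_dseq {i : ℕ} (hi : i < (pC f).card) : iIdx f (dseq f i) = i := by
  rw [iIdx, dif_pos ⟨i, hi, rfl⟩]
  obtain ⟨h1, h2⟩ := Nat.find_spec (⟨i, hi, rfl⟩ : ∃ j, j < (pC f).card ∧ dseq f j = dseq f i)
  exact dseq_inj f h1 hi h2

/-- The chain function associated to `f`. -/
noncomputable def chain : Fin n → Fin n := fun v =>
  if v ∈ pC f then (if iIdx f v + 1 < (pC f).card then dseq f (iIdx f v + 1) else v) else f v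

noncomputable def aOf : Fin n := dseq f 0
noncomputable def bOf : Fin n := dseq f ((pC f).card - 1)

lemma chain_of_not_mem {v : Fin n} (hv : v ∉ pC f) : chain f v = f v := if_neg hv

lemma chain_dseq {i : ℕ} (hi : i < (pC f).card) :
    chain f (dseq f i) = if i + 1 < (pC f).card then dseq f (i + 1) else dseq f i := by
  rw [chain, if_pos (dseq_mem f hi), iIdx_dseq f hi]

lemma chain_mem {v : Fin n} (hv : v ∈ pC f) : chain f v ∈ pC f := by
  obtain ⟨i, hi, rfl⟩ := exists_dseq f hv
  rw [chain_dseq f hi]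
  split
  · exact dseq_mem f (by assumption)
  · exact dseq_mem f hi

lemma chain_iterate {i : ℕ} (hi : i < (pC f).card) (m : ℕ) :
    (chain f)^[m] (dseq f i) = dseq f (min (i + m) ((pC f).card - 1)) := by
  induction m with
  | zero => simp; congr 1; omega
  | succ m ih =>
    rw [Function.iterate_succ_apply', ih]
    have hmin : min (i + m) ((pC f).card - 1) < (pC f).card := by omega
    rw [chain_dseq f hmin]
    rcases lt_or_ge (i + m) ((pC f).card - 1) with hc | hc
    · rw [if_pos (by omega)]
      congr 1
      omega
    · rw [if_neg (by omega)]
      congr 1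
      omega

lemma bOf_fixed : chain f (bOf f) = bOf f := by
  have hk := pC_card_pos f
  rw [bOf, chain_dseq f (by omega), if_neg (by omega)]

lemma periodicPts_chain : periodicPts (chain f) = {bOf f} := by
  have hk := pC_card_pos f
  apply Set.eq_singleton_iff_unique_mem.2
  constructor
  · exact mk_mem_periodicPts (by omega : 0 < 1) (by simpa [IsPeriodicPt, IsFixedPt] using bOf_fixed f)
  · intro v hv
    by_cases hvC : v ∈ pC f
    · obtain ⟨i, hi, rfl⟩ := exists_dseq f hvC
      obtain ⟨m, hm0, hmp⟩ := mem_periodicPts.1 hv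
      have : dseq f (min (i + m) ((pC f).card - 1)) = dseq f i := by
        rw [← chain_iterate f hi m]; exact hmp
      have := dseq_inj f (by omega) hi this
      have : i = (pC f).card - 1 := by omega
      rw [this]; rfl
    · exfalso
      have hvp : v ∈ periodicPts f :=
        periodicPts_of_agree (fun w hw => chain_of_not_mem f hw)
          (fun w hw => chain_mem f hw) hv hvC
      exact hvC ((mem_pC f).2 hvp)

end Phi


section Psi
variable (h : Fin n → Fin n) (a b : Fin n)

open Classical in
noncomputable def mOf : ℕ := if hex : ∃ m, h^[m] a = b then Nat.find hex else 0

noncomputable def oC : Finset (Fin n) :=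
  Finset.image (fun j : Fin (mOf h a b + 1) => h^[(j : ℕ)] a) Finset.univ

noncomputable def out : Fin n → Fin n := fun v =>
  if v ∈ oC h a b then h^[sIdx (oC h a b) v] a else h v

lemma mem_oC {v : Fin n} : v ∈ oC h a b ↔ ∃ j, j ≤ mOf h a b ∧ h^[j] a = v := by
  simp only [oC, Finset.mem_image, Finset.mem_univ, true_and]
  constructor
  · rintro ⟨j, hj⟩; exact ⟨j, by omega, hj⟩
  · rintro ⟨j, hj, hje⟩; exact ⟨⟨j, by omega⟩, hje⟩

lemma out_of_not_mem {v : Fin n} (hv : v ∉ oC h a b) : out h a b v = h v := if_neg hv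

variable {h a b} (hpp : periodicPts h = {b})
include hpp

lemma h_fixed : h b = b := by
  have hb : b ∈ periodicPts h := by rw [hpp]; rfl
  have := (bijOn_periodicPts h).mapsTo hb
  rwa [hpp] at this

lemma exists_reach : ∃ m, h^[m] a = b := by
  obtain ⟨m, hm⟩ := exists_iter_periodic h a
  rw [hpp] at hm
  exact ⟨m, hm⟩

lemma mOf_spec : h^[mOf h a b] a = b := by
  rw [mOf, dif_pos (exists_reach hpp)]
  exact Nat.find_spec (exists_reach hpp)

lemma mOf_min {j : ℕ} (hj : j < mOf h a b) : h^[j] a ≠ b := by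
  rw [mOf, dif_pos (exists_reach hpp)] at hj
  exact Nat.find_min (exists_reach hpp) hj

lemma orb_inj : ∀ i ≤ mOf h a b, ∀ j ≤ mOf h a b, h^[i] a = h^[j] a → i = j := by
  have key : ∀ i j, i < j → j ≤ mOf h a b → h^[i] a = h^[j] a → False := by
    intro i j hij hj he
    have hper : h^[i] a ∈ periodicPts h := by
      refine mk_mem_periodicPts (by omega : 0 < j - i) ?_
      show h^[j - i] (h^[i] a) = h^[i] a
      rw [← Function.iterate_add_apply, show j - i + i = j by omega]
      exact he.symm
    rw [hpp] at hper
    exact mOf_min hpp (by omega : i < mOf h a b) hper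
  intro i hi j hj he
  rcases lt_trichotomy i j with hc | hc | hc
  · exact absurd he (fun he => key i j hc hj he)
  · exact hc
  · exact absurd he.symm (fun he => key j i hc hi he)

lemma card_oC : (oC h a b).card = mOf h a b + 1 := by
  rw [oC, Finset.card_image_of_injective _ ?_, Finset.card_univ, Fintype.card_fin]
  intro i j hij
  exact Fin.ext (orb_inj hpp i (by omega) j (by omega) hij)

lemma a_mem_oC : a ∈ oC h a b := (mem_oC h a b).2 ⟨0, by omega, rfl⟩
lemma b_mem_oC : b ∈ oC h a b := (mem_oC h a b).2 ⟨mOf h a b, le_refl _, mOf_spec hpp⟩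

lemma out_ent {i : ℕ} (hi : i < mOf h a b + 1) : out h a b (ent (oC h a b) i) = h^[i] a := by
  have hi' : i < (oC h a b).card := by rw [card_oC hpp]; exact hi
  rw [out, if_pos (ent_mem hi'), sIdx_ent hi']

lemma out_mem {v : Fin n} (hv : v ∈ oC h a b) : out h a b v ∈ oC h a b := by
  rw [out, if_pos hv]
  refine (mem_oC h a b).2 ⟨sIdx (oC h a b) v, ?_, rfl⟩
  have := sIdx_lt hv
  rw [card_oC hpp] at this
  omega

lemma out_injOn : Set.InjOn (out h a b) (oC h a b) := by
  intro v hv w hw hvw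
  simp only [Finset.coe_mem, Finset.mem_coe] at hv hw
  rw [out, if_pos hv, out, if_pos hw] at hvw
  have hv' := sIdx_lt hv
  have hw' := sIdx_lt hw
  rw [card_oC hpp] at hv' hw'
  have := orb_inj hpp _ (by omega) _ (by omega) hvw
  rw [← ent_sIdx hv, ← ent_sIdx hw, this]

lemma periodicPts_out : periodicPts (out h a b) = (oC h a b : Set (Fin n)) := by
  ext v
  constructor
  · intro hv
    by_contra hvC
    have hvC' : v ∉ oC h a b := fun hc => hvC hc
    have : v ∈ periodicPts h :=
      periodicPts_of_agree (fun w hw => out_of_not_mem h a b hw)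
        (fun w hw => out_mem hpp hw) hv hvC'
    rw [hpp] at this
    have hvb : v = b := this
    exact hvC' (by rw [hvb]; exact b_mem_oC hpp)
  · intro hv
    exact mem_periodicPts_of_injOn (fun w hw => out_mem hpp hw) (out_injOn hpp) hv

end Psi

section RoundTrips
variable {n : ℕ} [NeZero n]

lemma iter_chain_aOf (f : Fin n → Fin n) (j : ℕ) :
    (chain f)^[j] (aOf f) = dseq f (min j ((pC f).card - 1)) := by
  have := chain_iterate f (pC_card_pos f) j
  simpa [aOf] using this

lemma mOf_chain (f : Fin n → Fin n) : mOf (chain f) (aOf f) (bOf f) = (pC f).card - 1 := by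
  have hk := pC_card_pos f
  have hex := exists_reach (a := aOf f) (periodicPts_chain f)
  rw [mOf, dif_pos hex, Nat.find_eq_iff hex]
  constructor
  · rw [iter_chain_aOf, min_self]; rfl
  · intro j hj he
    rw [iter_chain_aOf] at he
    have := dseq_inj f (by omega) (by omega) he
    omega

lemma oC_chain (f : Fin n → Fin n) : oC (chain f) (aOf f) (bOf f) = pC f := by
  have hk := pC_card_pos f
  have hpp := periodicPts_chain f
  refine (Finset.eq_of_subset_of_card_le ?_ ?_).symm.symm
  · intro v hv
    obtain ⟨j, hj, hje⟩ := (mem_oC _ _ _).1 hv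
    rw [iter_chain_aOf] at hje
    rw [← hje]
    exact dseq_mem f (by omega)
  · rw [card_oC hpp, mOf_chain f]
    omega

lemma out_chain (f : Fin n → Fin n) : out (chain f) (aOf f) (bOf f) = f := by
  have hk := pC_card_pos f
  funext v
  by_cases hv : v ∈ pC f
  · have hv' : v ∈ oC (chain f) (aOf f) (bOf f) := by rw [oC_chain]; exact hv
    rw [out, if_pos hv', oC_chain, iter_chain_aOf]
    have hs := sIdx_lt hv
    rw [min_eq_left (by omega)]
    rw [dseq, ent_sIdx hv]
  · rw [out_of_not_mem _ _ _ (by rw [oC_chain]; exact hv), chain_of_not_mem f hv]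

variable {h : Fin n → Fin n} {a b : Fin n} (hpp : periodicPts h = {b})
include hpp

lemma pC_out : pC (out h a b) = oC h a b := by
  ext v
  rw [mem_pC, periodicPts_out hpp, Finset.mem_coe]

lemma card_pC_out : (pC (out h a b)).card = mOf h a b + 1 := by
  rw [pC_out hpp, card_oC hpp]

lemma dseq_out {i : ℕ} (hi : i < mOf h a b + 1) : dseq (out h a b) i = h^[i] a := by
  rw [dseq, pC_out hpp]
  exact out_ent hpp hi

lemma aOf_out : aOf (out h a b) = a := by
  rw [aOf, dseq_out hpp (by omega)]
  rfl

lemma bOf_out : bOf (out h a b) = b := by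
  rw [bOf, card_pC_out hpp]
  rw [show mOf h a b + 1 - 1 = mOf h a b by omega]
  rw [dseq_out hpp (by omega)]
  exact mOf_spec hpp

lemma chain_out : chain (out h a b) = h := by
  funext v
  by_cases hv : v ∈ oC h a b
  · obtain ⟨j, hj, hje⟩ := (mem_oC _ _ _).1 hv
    have hj' : j < (pC (out h a b)).card := by rw [card_pC_out hpp]; omega
    have hvd : v = dseq (out h a b) j := by rw [dseq_out hpp (by omega), hje]
    rw [hvd, chain_dseq _ hj']
    rcases lt_or_ge (j + 1) ((pC (out h a b)).card) with hc | hc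
    · rw [if_pos hc]
      rw [dseq_out hpp (by rw [card_pC_out hpp] at hc; omega),
        dseq_out hpp (by omega), Function.iterate_succ_apply']
    · rw [if_neg (by omega)]
      have hjm : j = mOf h a b := by rw [card_pC_out hpp] at hc; omega
      rw [dseq_out hpp (by omega), hjm, mOf_spec hpp, h_fixed hpp]
  · rw [chain_of_not_mem _ (by rw [pC_out hpp]; exact hv), out_of_not_mem h a b hv]

end RoundTrips

section Assemble
variable {n : ℕ} [NeZero n]

/-- The Joyal-style equivalence. -/
noncomputable def joyal :
    (Fin n → Fin n) ≃ {q : (Fin n × Fin n) × (Fin n → Fin n) // periodicPts q.2 = {q.1.1}} where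
  toFun f := ⟨((bOf f, aOf f), chain f), periodicPts_chain f⟩
  invFun q := out q.1.2 q.1.1.2 q.1.1.1
  left_inv f := out_chain f
  right_inv := by
    rintro ⟨⟨⟨b, a⟩, h⟩, hpp⟩
    simp only at hpp ⊢
    apply Subtype.ext
    simp only
    rw [bOf_out hpp, aOf_out hpp, chain_out hpp]

lemma conj_iter (π : Equiv.Perm (Fin n)) (g : Fin n → Fin n) (hπ : ∀ x, π (π x) = x)
    (k : ℕ) (v : Fin n) : (⇑π ∘ g ∘ ⇑π)^[k] v = π (g^[k] (π v)) := by
  induction k with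
  | zero => simp [hπ]
  | succ k ih =>
    rw [Function.iterate_succ_apply', ih, Function.iterate_succ_apply']
    simp [hπ]

lemma conj_pp (π : Equiv.Perm (Fin n)) (g : Fin n → Fin n) (hπ : ∀ x, π (π x) = x)
    {c : Fin n} (hg : periodicPts g = {c}) :
    periodicPts (⇑π ∘ g ∘ ⇑π) = {π c} := by
  ext v
  simp only [Set.mem_singleton_iff]
  rw [mem_periodicPts]
  constructor
  · rintro ⟨k, hk, hkp⟩
    have : (⇑π ∘ g ∘ ⇑π)^[k] v = v := hkp
    rw [conj_iter π g hπ] at this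
    have h2 : g^[k] (π v) = π v := by
      have := congrArg π this
      rwa [hπ] at this
    have : π v ∈ periodicPts g := mk_mem_periodicPts hk h2
    rw [hg, Set.mem_singleton_iff] at this
    rw [← this, hπ]
  · rintro rfl
    have hc : c ∈ periodicPts g := by rw [hg]; rfl
    obtain ⟨k, hk, hkp⟩ := mem_periodicPts.1 hc
    refine mem_periodicPts.2 ⟨k, hk, ?_⟩
    show (⇑π ∘ g ∘ ⇑π)^[k] (π c) = π c
    rw [conj_iter π g hπ, hπ]
    exact congrArg π hkp

/-- Conjugation by a swap re-roots the trees. -/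
noncomputable def conjEquiv (b r : Fin n) :
    {h : Fin n → Fin n // periodicPts h = {b}} ≃ {h : Fin n → Fin n // periodicPts h = {r}} where
  toFun g := ⟨⇑(Equiv.swap b r) ∘ g.1 ∘ ⇑(Equiv.swap b r), by
    rw [conj_pp _ _ (fun x => Equiv.swap_apply_self b r x) g.2, Equiv.swap_apply_left]⟩
  invFun g := ⟨⇑(Equiv.swap b r) ∘ g.1 ∘ ⇑(Equiv.swap b r), by
    rw [conj_pp _ _ (fun x => Equiv.swap_apply_self b r x) g.2, Equiv.swap_apply_right]⟩
  left_inv g := by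
    apply Subtype.ext
    funext v
    simp [Equiv.swap_apply_self]
  right_inv g := by
    apply Subtype.ext
    funext v
    simp [Equiv.swap_apply_self]

end Assemble

end CayleyAux

open CayleyAux Function in
theorem card_unique_cyclic_vertex_eq_root (n : ℕ) (hn : 1 ≤ n) (r : Fin n) :
    Nat.card {f : Fin n → Fin n // ∀ v : Fin n, (∃ k, 1 ≤ k ∧ f^[k] v = v) ↔ v = r}
      = n ^ (n - 2) := by
  haveI : NeZero n := ⟨by omega⟩
  have e0 : {f : Fin n → Fin n // ∀ v : Fin n, (∃ k, 1 ≤ k ∧ f^[k] v = v) ↔ v = r}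
      ≃ {h : Fin n → Fin n // periodicPts h = {r}} :=
    Equiv.subtypeEquivRight (fun f => by
      constructor
      · intro hf
        exact Set.ext fun v => hf v
      · intro hf v
        exact (Set.ext_iff.1 hf v))
  rw [Nat.card_congr e0]
  have big : (Fin n → Fin n) ≃ (Fin n × Fin n) × {h : Fin n → Fin n // periodicPts h = {r}} :=
    (joyal.trans (Equiv.subtypeProdEquivSigmaSubtype
        (fun (p : Fin n × Fin n) (h : Fin n → Fin n) => periodicPts h = {p.1}))).trans
      ((Equiv.sigmaCongrRight (fun p : Fin n × Fin n => conjEquiv p.1 r)).trans (Equiv.sigmaEquivProd _ _))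
  have key : n ^ n = n * n * Nat.card {h : Fin n → Fin n // periodicPts h = {r}} := by
    calc n ^ n = Nat.card (Fin n → Fin n) := by
          simp [Nat.card_eq_fintype_card]
      _ = Nat.card ((Fin n × Fin n) × {h : Fin n → Fin n // periodicPts h = {r}}) :=
          Nat.card_congr big
      _ = n * n * Nat.card {h : Fin n → Fin n // periodicPts h = {r}} := by
          rw [Nat.card_prod, Nat.card_prod]
          simp [mul_assoc]
  have key2 : n * n * Nat.card {h : Fin n → Fin n // periodicPts h = {r}}
      = n * n * n ^ (n - 2) := by
    rw [← key]
    rcases Nat.lt_or_ge n 2 with hc | hc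
    · interval_cases n
      · norm_num
    · have h2 : 2 + (n - 2) = n := by omega
      calc n ^ n = n ^ (2 + (n - 2)) := by rw [h2]
        _ = n ^ 2 * n ^ (n - 2) := pow_add n 2 (n - 2)
        _ = n * n * n ^ (n - 2) := by ring
  exact Nat.eq_of_mul_eq_mul_left (by positivity) key2
end
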